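/- arXiv:1007.4150 — 7 statements merged into one kernel-verified Lean document; each statement's English description precedes it below -/
import Mathlib

section
/- Let r > 2 and n > r be integers, and let δ = cp(n-1, r-1)/cp(n, r) (a positive rational number). Then cp(n, r) · C(δn, r) ≤ C(n, r), where for a real number x and positive integer r, C(x, r) denotes the generalized binomial coefficient x(x-1)···(x-r+1)/r!. -/
/-- A clique partition of the `r`-element subsets of `[n]`: a collection of
proper subsets of `[n]` such that every `r`-element subset is contained in
exactly one member. -/
def IsCliquePartition (n r : ℕ) (P : Finset (Finset (Fin n))) : Prop :=
  (∀ A ∈ P, A ≠ Finset.univ) ∧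
  ∀ S : Finset (Fin n), S.card = r → ∃! A, A ∈ P ∧ S ⊆ A

/-- `cp n r` is the minimum size of a clique partition of the `r`-subsets of `[n]`. -/
noncomputable def cp (n r : ℕ) : ℕ :=
  sInf {t | ∃ P : Finset (Finset (Fin n)), IsCliquePartition n r P ∧ P.card = t}

/-- Generalized binomial coefficient `C(x, r) = x(x-1)⋯(x-r+1)/r!` for real `x`. -/
noncomputable def rbinom (x : ℝ) (r : ℕ) : ℝ :=
  (∏ i ∈ Finset.range r, (x - i)) / (Nat.factorial r)

/-!
Take an optimal clique partition `P`, with `t = cp n r` blocks. The blocks through a point `v`,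
with `v` deleted, form a clique partition of the `(r-1)`-subsets of the other `n - 1` points, so
every point lies in at least `cp (n-1) (r-1) = δ t` blocks and the block sizes average at least
`δ n`. Every `r`-set lies in exactly one block, so `∑ C(|A|, r) = C(n, r)`, and Jensen's inequality
for `C(·, r)`, convex and increasing on `[r - 1, ∞)`, gives `t C(δ n, r) ≤ C(n, r)` when
`δ n ≥ r - 1`. Otherwise `|C(δ n, r)| ≤ 1`, and `t ≤ C(n, r)` by the partition into all `r`-sets.
-/

open Finset Polynomial

lemma isCliquePartition_powersetCard_univ {n r : ℕ} (hrn : r < n) :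
    IsCliquePartition n r (univ.powersetCard r) := by
  refine ⟨fun A hA hAu => ?_, fun S hS => ⟨S, by simp [hS], fun A ⟨hA, hSA⟩ => ?_⟩⟩
  · rw [mem_powersetCard_univ, hAu, card_univ, Fintype.card_fin] at hA
    omega
  · rw [mem_powersetCard_univ] at hA
    exact (eq_of_subset_of_card_le hSA (by omega)).symm

lemma IsCliquePartition.cp_le_card {n r : ℕ} {P : Finset (Finset (Fin n))}
    (hP : IsCliquePartition n r P) : cp n r ≤ #P :=
  Nat.sInf_le ⟨P, hP, rfl⟩

lemma cp_le_choose {n r : ℕ} (hrn : r < n) : cp n r ≤ n.choose r := by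
  simpa using (isCliquePartition_powersetCard_univ hrn).cp_le_card

lemma exists_isCliquePartition_card_eq_cp {n r : ℕ} (hrn : r < n) :
    ∃ P, IsCliquePartition n r P ∧ #P = cp n r :=
  Nat.sInf_mem (s := {t | ∃ P, IsCliquePartition n r P ∧ #P = t})
    ⟨_, _, isCliquePartition_powersetCard_univ hrn, rfl⟩

lemma IsCliquePartition.sum_choose_card {n r : ℕ} {P : Finset (Finset (Fin n))}
    (hP : IsCliquePartition n r P) : ∑ A ∈ P, (#A).choose r = n.choose r := by
  classical
  have hblock : ∀ S ∈ univ.powersetCard r, #(P.bipartiteBelow (fun A S => S ⊆ A) S) = 1 := by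
    intro S hS
    rw [card_eq_one_iff_existsUnique]
    simpa [bipartiteBelow] using hP.2 S (mem_powersetCard_univ.1 hS)
  have hdouble := sum_card_bipartiteAbove_eq_sum_card_bipartiteBelow
    (s := P) (t := univ.powersetCard r) (r := fun A S => S ⊆ A)
  have hsubsets : ∀ A : Finset (Fin n),
      (univ.powersetCard r).bipartiteAbove (fun A S => S ⊆ A) A = A.powersetCard r := by
    intro A
    ext S
    simp [bipartiteAbove, and_comm]
  rw [sum_congr rfl hblock] at hdouble
  simpa [hsubsets] using hdouble

def link {m : ℕ} (P : Finset (Finset (Fin (m + 1)))) (v : Fin (m + 1)) :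
    Finset (Finset (Fin m)) :=
  {A ∈ P | v ∈ A}.image fun A => ({x | v.succAbove x ∈ A} : Finset (Fin m))

lemma insert_map_succAboveEmb_subset_iff {m : ℕ} (v : Fin (m + 1)) (S : Finset (Fin m))
    (A : Finset (Fin (m + 1))) :
    insert v (S.map v.succAboveEmb) ⊆ A ↔
      v ∈ A ∧ S ⊆ ({x | v.succAbove x ∈ A} : Finset (Fin m)) := by
  simp [subset_iff]

lemma IsCliquePartition.link {m q : ℕ} {P : Finset (Finset (Fin (m + 1)))}
    (hP : IsCliquePartition (m + 1) (q + 1) P) (v : Fin (m + 1)) :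
    IsCliquePartition m q (link P v) := by
  refine ⟨fun B hB hBu => ?_, fun S hS => ?_⟩
  · obtain ⟨A, hA, rfl⟩ := mem_image.1 hB
    rw [mem_filter] at hA
    refine hP.1 A hA.1 (eq_univ_of_forall fun y => ?_)
    rcases v.eq_self_or_eq_succAbove y with rfl | ⟨z, rfl⟩
    · exact hA.2
    · simpa using (eq_univ_iff_forall.1 hBu) z
  · have hT : #(insert v (S.map v.succAboveEmb)) = q + 1 := by
      rw [card_insert_of_notMem (by simp), card_map, hS]
    obtain ⟨A, ⟨hA, hTA⟩, huniq⟩ := hP.2 _ hT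
    rw [insert_map_succAboveEmb_subset_iff] at hTA
    refine ⟨_, ⟨mem_image_of_mem _ (mem_filter.2 ⟨hA, hTA.1⟩), hTA.2⟩, ?_⟩
    rintro _ ⟨hB, hSB⟩
    obtain ⟨A', hA', rfl⟩ := mem_image.1 hB
    rw [mem_filter] at hA'
    rw [huniq A' ⟨hA'.1, (insert_map_succAboveEmb_subset_iff v S A').2 ⟨hA'.2, hSB⟩⟩]

lemma IsCliquePartition.cp_le_card_filter_mem {m q : ℕ} {P : Finset (Finset (Fin (m + 1)))}
    (hP : IsCliquePartition (m + 1) (q + 1) P) (v : Fin (m + 1)) :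
    cp m q ≤ #{A ∈ P | v ∈ A} :=
  (hP.link v).cp_le_card.trans card_image_le

lemma IsCliquePartition.mul_cp_le_sum_card {m q : ℕ} {P : Finset (Finset (Fin (m + 1)))}
    (hP : IsCliquePartition (m + 1) (q + 1) P) : (m + 1) * cp m q ≤ ∑ A ∈ P, #A := by
  simpa using le_sum_card hP.cp_le_card_filter_mem

lemma rbinom_eq_descPochhammer_eval_div (x : ℝ) (r : ℕ) :
    rbinom x r = (descPochhammer ℝ r).eval x / r.factorial := by
  rw [rbinom, descPochhammer_eval_eq_prod_range]

lemma rbinom_natCast (n r : ℕ) : rbinom n r = n.choose r := by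
  rw [rbinom_eq_descPochhammer_eval_div, Nat.cast_choose_eq_descPochhammer_div]

lemma abs_descPochhammer_eval_le_factorial {r : ℕ} {x : ℝ} (hx₀ : 0 ≤ x) (hx : x ≤ r - 1) :
    |(descPochhammer ℝ r).eval x| ≤ r.factorial := by
  induction r with
  | zero => simp
  | succ r ih =>
    push_cast at hx
    have hD : |(descPochhammer ℝ r).eval x| ≤ r.factorial := by
      rcases le_total x (r - 1) with hxr | hxr
      · exact ih hxr
      · have hmono : (descPochhammer ℝ r).eval x ≤ (descPochhammer ℝ r).eval (r : ℝ) :=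
          monotoneOn_descPochhammer_eval r hxr (by simp) (by linarith)
        rw [descPochhammer_eval_eq_descFactorial, Nat.descFactorial_self] at hmono
        rwa [abs_of_nonneg (descPochhammer_nonneg hxr)]
    have hlin : |x - r| ≤ r + 1 := abs_le.2 ⟨by linarith, by linarith⟩
    rw [descPochhammer_succ_eval, abs_mul, Nat.factorial_succ, Nat.cast_mul, mul_comm,
      Nat.cast_succ]
    exact mul_le_mul hlin hD (abs_nonneg _) (by positivity)

lemma rbinom_le_one {r : ℕ} {x : ℝ} (hx₀ : 0 ≤ x) (hx : x ≤ r - 1) : rbinom x r ≤ 1 := by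
  rw [rbinom_eq_descPochhammer_eval_div, div_le_one (by positivity)]
  exact (le_abs_self _).trans (abs_descPochhammer_eval_le_factorial hx₀ hx)

lemma card_mul_rbinom_le_sum_choose {ι : Type*} {s : Finset ι} (hs : s.Nonempty) (p : ι → ℕ)
    {r : ℕ} (hr : r ≠ 0) {x : ℝ} (hx : r - 1 ≤ x) (hxp : x * #s ≤ ∑ i ∈ s, (p i : ℝ)) :
    #s * rbinom x r ≤ ∑ i ∈ s, ((p i).choose r : ℝ) := by
  have hs₀ : (0 : ℝ) < #s := by exact_mod_cast hs.card_pos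
  have hx' : x ≤ ∑ i ∈ s, (#s : ℝ)⁻¹ * p i := by
    rw [← mul_sum, inv_mul_eq_div, le_div_iff₀ hs₀]
    exact hxp
  have hjensen := descPochhammer_eval_div_factorial_le_sum_choose hr p (fun _ => (#s : ℝ)⁻¹)
    (t := s) (fun _ _ => by positivity) (by simp [hs₀.ne']) (hx.trans hx')
  have hmono : (descPochhammer ℝ r).eval x ≤ (descPochhammer ℝ r).eval _ :=
    monotoneOn_descPochhammer_eval r hx (hx.trans hx') hx'
  rw [← mul_sum (a := (#s : ℝ)⁻¹) (f := fun i => ((p i).choose r : ℝ))] at hjensen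
  rw [rbinom_eq_descPochhammer_eval_div]
  calc (#s : ℝ) * ((descPochhammer ℝ r).eval x / r.factorial)
      ≤ #s * ((#s : ℝ)⁻¹ * ∑ i ∈ s, ((p i).choose r : ℝ)) := by
        gcongr
        exact (div_le_div_of_nonneg_right hmono (by positivity)).trans hjensen
    _ = ∑ i ∈ s, ((p i).choose r : ℝ) := by field_simp

/-- for integers `r > 2`, `n > r`, with
`δ = cp(n-1, r-1)/cp(n, r)`, we have `cp(n, r) · C(δn, r) ≤ C(n, r)`. -/
theorem cliquePartition_lower_recursion (n r : ℕ) (hr : 2 < r) (hn : r < n)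
    (δ : ℝ) (hδ : δ = (cp (n - 1) (r - 1) : ℝ) / (cp n r : ℝ)) :
    (cp n r : ℝ) * rbinom (δ * n) r ≤ rbinom (n : ℝ) r := by
  obtain ⟨m, rfl⟩ : ∃ m, n = m + 1 := ⟨n - 1, by omega⟩
  obtain ⟨q, rfl⟩ : ∃ q, r = q + 1 := ⟨r - 1, by omega⟩
  rw [Nat.add_sub_cancel, Nat.add_sub_cancel] at hδ
  obtain ⟨P, hP, hPcard⟩ := exists_isCliquePartition_card_eq_cp hn
  rw [rbinom_natCast, ← hPcard]
  rcases P.eq_empty_or_nonempty with rfl | hPne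
  · simp
  have hδ₀ : 0 ≤ δ := hδ ▸ by positivity
  have hδP : δ * #P = cp m q := by
    rw [hδ, hPcard, div_mul_cancel₀ _ (by simpa [← hPcard] using hPne.card_pos.ne')]
  rcases le_total (δ * (m + 1 : ℕ)) ((q + 1 : ℕ) - 1) with hsmall | hlarge
  · calc (#P : ℝ) * rbinom (δ * (m + 1 : ℕ)) (q + 1) ≤ #P * 1 := by
          gcongr
          exact rbinom_le_one (by positivity) hsmall
      _ ≤ (m + 1).choose (q + 1) := by
          rw [mul_one, hPcard]
          exact_mod_cast cp_le_choose hn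
  · have hmean : δ * (m + 1 : ℕ) * #P ≤ ∑ A ∈ P, (#A : ℝ) := by
      rw [mul_right_comm, hδP]
      exact_mod_cast (mul_comm _ _).trans_le hP.mul_cp_le_sum_card
    rw [← hP.sum_choose_card, Nat.cast_sum]
    exact card_mul_rbinom_le_sum_choose hPne card (Nat.succ_ne_zero q) hlarge hmean
end

section
/- Let q be a prime power with q ≡ 3 (mod 4) and let F_q be the finite field with q elements. Then every three distinct non-collinear points of F_q × F_q lie in exactly one circle C(a, λ) with a ∈ F_q × F_q and λ ∈ F_q \ {0}; moreover, no three distinct collinear points of F_q × F_q lie on a common circle C(a, λ). -/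
/-- `p` lies on the circle with center `a` and radius `lam`. -/
def OnCircle {F : Type} [Field F] (a : F × F) (lam : F) (p : F × F) : Prop :=
  (p.1 - a.1) ^ 2 + (p.2 - a.2) ^ 2 = lam

/-- Three points of `F × F` are collinear: they lie on a common affine line
`{(x₁,x₂) : x₂ = b₁x₁ + b₂}` or `{(x₁,x₂) : x₁ = μ}`. -/
def Collin3 {F : Type} [Field F] (x y z : F × F) : Prop :=
  (∃ b₁ b₂ : F, x.2 = b₁ * x.1 + b₂ ∧ y.2 = b₁ * y.1 + b₂ ∧ z.2 = b₁ * z.1 + b₂) ∨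
  (∃ μ : F, x.1 = μ ∧ y.1 = μ ∧ z.1 = μ)

/-!
When `-1` is not a square in `F` (for `F_q` this is `q ≡ 3 mod 4`), the form `u₁² + u₂²` is
anisotropic, so circles behave as in the real plane. Two circles through `x` and `y` have their
centers on the perpendicular bisector of `xy`, a line; for non-collinear `x, y, z` the two bisectors
meet in exactly one point, the unique center, and the radius is nonzero because a circle of radius
`0` is a single point. A line `p + t d` meets a circle in the roots of a quadratic in `t` with
leading coefficient `d₁² + d₂² ≠ 0`, so in at most two points.
-/

section Algebra

variable {F : Type*} [Field F]

theorem two_ne_zero_of_not_isSquare_neg_one (hns : ¬IsSquare (-1 : F)) : (2 : F) ≠ 0 :=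
  fun h ↦ hns ⟨1, by linear_combination -h⟩

theorem eq_zero_of_sq_add_sq_eq_zero (hns : ¬IsSquare (-1 : F)) {a b : F}
    (h : a ^ 2 + b ^ 2 = 0) : a = 0 ∧ b = 0 := by
  by_cases hb : b = 0
  · subst hb
    exact ⟨pow_eq_zero_iff two_ne_zero |>.mp (by linear_combination h), rfl⟩
  · exact absurd ⟨a / b, by field_simp; linear_combination -h⟩ hns

theorem existsUnique_dot_eq_of_det_ne_zero {u w : F × F} (hD : u.1 * w.2 - u.2 * w.1 ≠ 0)
    (c d : F) : ∃! v : F × F, u.1 * v.1 + u.2 * v.2 = c ∧ w.1 * v.1 + w.2 * v.2 = d := by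
  -- Cramer's rule
  refine ⟨((c * w.2 - d * u.2) / (u.1 * w.2 - u.2 * w.1),
    (u.1 * d - w.1 * c) / (u.1 * w.2 - u.2 * w.1)), ⟨?_, ?_⟩, ?_⟩
  · rw [mul_div_assoc', mul_div_assoc', ← add_div, div_eq_iff hD]; ring
  · rw [mul_div_assoc', mul_div_assoc', ← add_div, div_eq_iff hD]; ring
  · rintro v ⟨hc, hd⟩
    ext
    · rw [eq_div_iff hD]; linear_combination w.2 * hc - u.2 * hd
    · rw [eq_div_iff hD]; linear_combination u.1 * hd - w.1 * hc

theorem eq_of_quadratic_eq_zero_of_ne {α β γ s t r : F} (hα : α ≠ 0) (hst : s ≠ t) (hsr : s ≠ r)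
    (hs : α * s ^ 2 + β * s + γ = 0) (ht : α * t ^ 2 + β * t + γ = 0)
    (hr : α * r ^ 2 + β * r + γ = 0) : t = r := by
  have vieta {u : F} (hsu : s ≠ u) (hu : α * u ^ 2 + β * u + γ = 0) : α * (u + s) + β = 0 := by
    have : (u - s) * (α * (u + s) + β) = 0 := by linear_combination hu - hs
    exact (mul_eq_zero.mp this).resolve_left (sub_ne_zero.mpr hsu.symm)
  have : α * (t - r) = 0 := by linear_combination vieta hst ht - vieta hsr hr
  exact sub_eq_zero.mp ((mul_eq_zero.mp this).resolve_left hα)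

end Algebra

section Geometry

variable {F : Type} [Field F]

theorem collin3_of_det_eq_zero {x y z : F × F} (hxy : x ≠ y)
    (hD : (y.1 - x.1) * (z.2 - x.2) - (y.2 - x.2) * (z.1 - x.1) = 0) : Collin3 x y z := by
  by_cases h1 : y.1 = x.1
  · by_cases h2 : z.1 = x.1
    · exact Or.inr ⟨x.1, rfl, h1, h2⟩
    · have h3 : (y.2 - x.2) * (z.1 - x.1) = 0 := by rw [h1] at hD; linear_combination -hD
      have h4 : y.2 = x.2 :=
        sub_eq_zero.mp ((mul_eq_zero.mp h3).resolve_right (sub_ne_zero.mpr h2))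
      exact absurd (Prod.ext h1.symm h4.symm) hxy
  · have hy : y.1 - x.1 ≠ 0 := sub_ne_zero.mpr h1
    refine Or.inl ⟨(y.2 - x.2) / (y.1 - x.1), x.2 - (y.2 - x.2) / (y.1 - x.1) * x.1,
      by ring, ?_, ?_⟩
    · field_simp; ring
    · field_simp; linear_combination hD

theorem Collin3.exists_eq_add_smul {x y z : F × F} (h : Collin3 x y z) :
    ∃ p d : F × F, d ≠ 0 ∧ ∃ s t r : F, x = p + s • d ∧ y = p + t • d ∧ z = p + r • d := by
  rcases h with ⟨b₁, b₂, hx, hy, hz⟩ | ⟨μ, hx, hy, hz⟩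
  · refine ⟨(0, b₂), (1, b₁), by simp, x.1, y.1, z.1, ?_, ?_, ?_⟩ <;>
      ext <;> simp [hx, hy, hz] <;> ring
  · refine ⟨(μ, 0), (0, 1), by simp, x.2, y.2, z.2, ?_, ?_, ?_⟩ <;> ext <;> simp [*]

variable (hns : ¬IsSquare (-1 : F))
include hns

theorem eq_of_onCircle_zero {a p : F × F} (hp : OnCircle a 0 p) : p = a := by
  obtain ⟨h₁, h₂⟩ := eq_zero_of_sq_add_sq_eq_zero hns hp
  exact Prod.ext (sub_eq_zero.mp h₁) (sub_eq_zero.mp h₂)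

theorem onCircle_iff_of_onCircle {a x : F × F} {lam : F} (hx : OnCircle a lam x) (y : F × F) :
    OnCircle a lam y ↔
      (y.1 - x.1) * a.1 + (y.2 - x.2) * a.2 = (y.1 ^ 2 + y.2 ^ 2 - (x.1 ^ 2 + x.2 ^ 2)) / 2 := by
  have h2 := two_ne_zero_of_not_isSquare_neg_one hns
  unfold OnCircle at hx ⊢
  rw [eq_div_iff h2, ← hx]
  constructor <;> intro h <;> linear_combination -h

theorem existsUnique_circle_of_not_collin3 {x y z : F × F} (hxy : x ≠ y) (h : ¬Collin3 x y z) :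
    ∃! c : (F × F) × F, c.2 ≠ 0 ∧ OnCircle c.1 c.2 x ∧ OnCircle c.1 c.2 y ∧ OnCircle c.1 c.2 z := by
  have hD := mt (collin3_of_det_eq_zero hxy) h
  obtain ⟨a, ⟨hay, haz⟩, ha_unique⟩ :=
    existsUnique_dot_eq_of_det_ne_zero (u := y - x) (w := z - x) hD
    ((y.1 ^ 2 + y.2 ^ 2 - (x.1 ^ 2 + x.2 ^ 2)) / 2) ((z.1 ^ 2 + z.2 ^ 2 - (x.1 ^ 2 + x.2 ^ 2)) / 2)
  set lam := (x.1 - a.1) ^ 2 + (x.2 - a.2) ^ 2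
  have hx : OnCircle a lam x := rfl
  have hy := (onCircle_iff_of_onCircle hns hx y).mpr hay
  have hz := (onCircle_iff_of_onCircle hns hx z).mpr haz
  have hlam : lam ≠ 0 := fun h0 ↦
    hxy <| (eq_of_onCircle_zero hns (h0 ▸ hx)).trans (eq_of_onCircle_zero hns (h0 ▸ hy)).symm
  refine ⟨(a, lam), ⟨hlam, hx, hy, hz⟩, ?_⟩
  rintro ⟨b, mu⟩ ⟨-, hbx, hby, hbz⟩
  obtain rfl : b = a := ha_unique b
    ⟨(onCircle_iff_of_onCircle hns hbx y).mp hby, (onCircle_iff_of_onCircle hns hbx z).mp hbz⟩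
  exact Prod.ext rfl hbx.symm

theorem eq_of_onCircle_of_eq_add_smul {a p d x y z : F × F} {lam s t r : F} (hd : d ≠ 0)
    (hpx : x = p + s • d) (hpy : y = p + t • d) (hpz : z = p + r • d) (hxy : x ≠ y) (hxz : x ≠ z)
    (hx : OnCircle a lam x) (hy : OnCircle a lam y) (hz : OnCircle a lam z) : y = z := by
  have hα : d.1 ^ 2 + d.2 ^ 2 ≠ 0 := fun h ↦
    hd (Prod.ext_iff.mpr (eq_zero_of_sq_add_sq_eq_zero hns h))
  subst hpx hpy hpz
  unfold OnCircle at hx hy hz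
  simp only [Prod.fst_add, Prod.snd_add, Prod.smul_fst, Prod.smul_snd, smul_eq_mul] at hx hy hz
  obtain rfl : t = r := eq_of_quadratic_eq_zero_of_ne (s := s) hα
    (β := 2 * ((p.1 - a.1) * d.1 + (p.2 - a.2) * d.2))
    (γ := (p.1 - a.1) ^ 2 + (p.2 - a.2) ^ 2 - lam)
    (by rintro rfl; exact hxy rfl) (by rintro rfl; exact hxz rfl)
    (by linear_combination hx) (by linear_combination hy) (by linear_combination hz)
  rfl

theorem not_exists_circle_of_collin3 {x y z : F × F} (hxy : x ≠ y) (hxz : x ≠ z) (hyz : y ≠ z)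
    (h : Collin3 x y z) :
    ¬∃ (a : F × F) (lam : F), OnCircle a lam x ∧ OnCircle a lam y ∧ OnCircle a lam z := by
  obtain ⟨p, d, hd, s, t, r, hpx, hpy, hpz⟩ := h.exists_eq_add_smul
  rintro ⟨a, lam, hx, hy, hz⟩
  exact hyz (eq_of_onCircle_of_eq_add_smul hns hd hpx hpy hpz hxy hxz hx hy hz)

end Geometry

theorem three_points_unique_circle_general (q : ℕ) (hq4 : q % 4 = 3)
    (F : Type) [Field F] [Fintype F] (hF : Fintype.card F = q)
    (x y z : F × F) (hxy : x ≠ y) (hxz : x ≠ z) (hyz : y ≠ z) :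
    (¬ Collin3 x y z →
      ∃! c : (F × F) × F, c.2 ≠ 0 ∧
        OnCircle c.1 c.2 x ∧ OnCircle c.1 c.2 y ∧ OnCircle c.1 c.2 z) ∧
    (Collin3 x y z →
      ¬ ∃ (a : F × F) (lam : F), lam ≠ 0 ∧
        OnCircle a lam x ∧ OnCircle a lam y ∧ OnCircle a lam z) := by
  have hns : ¬IsSquare (-1 : F) := by
    rw [FiniteField.isSquare_neg_one_iff, hF]
    omega
  refine ⟨existsUnique_circle_of_not_collin3 hns hxy, fun h ↦ ?_⟩
  rintro ⟨a, lam, -, hx, hy, hz⟩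
  exact not_exists_circle_of_collin3 hns hxy hxz hyz h ⟨a, lam, hx, hy, hz⟩

/-- over `F_q` with `q ≡ 3 (mod 4)` a prime power, three distinct
non-collinear points lie on exactly one circle `C(a, λ)` with `λ ≠ 0`, and no
three distinct collinear points lie on a common circle. -/
theorem three_points_unique_circle (q : ℕ) (hq : IsPrimePow q) (hq4 : q % 4 = 3)
    (F : Type) [Field F] [Fintype F] (hF : Fintype.card F = q)
    (x y z : F × F) (hxy : x ≠ y) (hxz : x ≠ z) (hyz : y ≠ z) :
    (¬ Collin3 x y z →
      ∃! c : (F × F) × F, c.2 ≠ 0 ∧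
        OnCircle c.1 c.2 x ∧ OnCircle c.1 c.2 y ∧ OnCircle c.1 c.2 z) ∧
    (Collin3 x y z →
      ¬ ∃ (a : F × F) (lam : F), lam ≠ 0 ∧
        OnCircle a lam x ∧ OnCircle a lam y ∧ OnCircle a lam z) :=
  three_points_unique_circle_general q hq4 F hF x y z hxy hxz hyz
end

section
/- Let q be a prime power with q ≡ 3 (mod 4) and let n = q² + 1. Then there exists a family of q³ + q subsets of an n-element set, each of size q + 1, such that every 3-element subset of the n-element set is contained in exactly one member of the family. Consequently, cp(q² + 1, 3) ≤ q³ + q. -/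
/-!
The blocks are the Baer sublines of the projective line `ℙ¹(𝔽_{q²})`, which has `q² + 1` points:
for `𝔽_{q²}`-independent `x, y`, the `q + 1` points `[a x + b y]` with `(a, b) ∈ 𝔽_q² ∖ 0`
(the Miquelian inversive plane). Three distinct points can be written `[u], [w], [u + w]`, so they
lie on the subline of `(u, w)`. If they also lie on the subline of `(x, y)`, say `u = c₁ φ k₁`,
`w = c₂ φ k₂`, `u + w = c₃ φ k₃` with `φ (a, b) = a x + b y`, then `k₁, k₂` is an `𝔽_q`-basis and
comparing coefficients gives `c₁ / c₃, c₂ / c₃ ∈ 𝔽_q`; so the subline of `(u, w)` is contained in,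
and by counting equal to, that of `(x, y)`. Counting triples then gives
`C(q² + 1, 3) / C(q + 1, 3) = q³ + q` blocks.
-/

open Finset Module Function Projectivization
open scoped LinearAlgebra.Projectivization

section Steiner

variable {α β : Type*}

def IsSteinerSystem (t k : ℕ) (P : Finset (Finset α)) : Prop :=
  (∀ A ∈ P, #A = k) ∧ ∀ S : Finset α, #S = t → ∃! A, A ∈ P ∧ S ⊆ A

namespace IsSteinerSystem

variable {t k : ℕ} {P : Finset (Finset α)}

theorem card_mul_choose [Fintype α] (hP : IsSteinerSystem t k P) :
    #P * k.choose t = (Fintype.card α).choose t := by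
  classical
  have hcover : (univ : Finset α).powersetCard t = P.biUnion (powersetCard t) := by
    ext S
    simp only [mem_powersetCard, mem_biUnion, subset_univ, true_and]
    refine ⟨fun hS => ?_, fun ⟨_, _, _, hS⟩ => hS⟩
    obtain ⟨A, ⟨hA, hSA⟩, -⟩ := hP.2 S hS
    exact ⟨A, hA, hSA, hS⟩
  have hdisj : (P : Set (Finset α)).PairwiseDisjoint (powersetCard t) := by
    intro A hA B hB hAB
    refine disjoint_left.mpr fun S hSA hSB => hAB ?_
    rw [mem_powersetCard] at hSA hSB
    exact (hP.2 S hSA.2).unique ⟨hA, hSA.1⟩ ⟨hB, hSB.1⟩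
  rw [← card_univ, ← card_powersetCard, hcover, card_biUnion hdisj,
    sum_congr rfl fun A hA => by rw [card_powersetCard, hP.1 A hA], sum_const, smul_eq_mul]

theorem map_equiv (hP : IsSteinerSystem t k P) (e : α ≃ β) :
    IsSteinerSystem t k (P.map e.finsetCongr.toEmbedding) := by
  refine ⟨fun A hA => ?_, fun S hS => ?_⟩
  · obtain ⟨A', hA', rfl⟩ := mem_map.mp hA
    simpa using hP.1 A' hA'
  · obtain ⟨A, ⟨hA, hSA⟩, huniq⟩ := hP.2 (S.map e.symm.toEmbedding) (by simpa using hS)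
    refine ⟨A.map e.toEmbedding, ⟨mem_map_of_mem _ hA, ?_⟩, ?_⟩
    · simpa [map_map] using (map_subset_map (f := e.toEmbedding)).mpr hSA
    · rintro _ ⟨hB, hSB⟩
      obtain ⟨B, hB', rfl⟩ := mem_map.mp hB
      rw [huniq B ⟨hB', ?_⟩]
      · rfl
      · simpa [map_map] using (map_subset_map (f := e.symm.toEmbedding)).mpr hSB

end IsSteinerSystem

end Steiner

section Baer

variable (K F : Type*) {V : Type*} [Field K] [Field F] [Algebra K F] [AddCommGroup V] [Module F V]

def frameMap (x y : V) : K × K →ₛₗ[algebraMap K F] V where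
  toFun k := algebraMap K F k.1 • x + algebraMap K F k.2 • y
  map_add' k k' := by simp only [Prod.fst_add, Prod.snd_add, map_add, add_smul]; abel
  map_smul' c k := by
    simp only [Prod.smul_fst, Prod.smul_snd, smul_eq_mul, map_mul, mul_smul, smul_add]

@[simp] lemma frameMap_apply (x y : V) (k : K × K) :
    frameMap K F x y k = algebraMap K F k.1 • x + algebraMap K F k.2 • y := rfl

def baerSubline (x y : V) : Set (ℙ F V) :=
  {p | ∃ k : K × K, ∃ hk : frameMap K F x y k ≠ 0, mk F _ hk = p}

variable {K F}

lemma frameMap_injective {x y : V} (h : LinearIndependent F ![x, y]) :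
    Injective (frameMap K F x y) := by
  intro k k' hk
  obtain ⟨h₁, h₂⟩ := h.eq_of_pair hk
  exact Prod.ext ((algebraMap K F).injective h₁) ((algebraMap K F).injective h₂)

lemma mem_range_algebraMap_of_smul_frameMap_eq {x y : V} (h : LinearIndependent F ![x, y])
    {a : F} {k k' : K × K} (hk' : k' ≠ 0) (hkk' : a • frameMap K F x y k' = frameMap K F x y k) :
    a ∈ Set.range (algebraMap K F) := by
  simp only [frameMap_apply, smul_add, smul_smul] at hkk'
  obtain ⟨h₁, h₂⟩ := h.eq_of_pair hkk'
  have quotient : ∀ {s t : K}, s ≠ 0 → a * algebraMap K F s = algebraMap K F t →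
      a ∈ Set.range (algebraMap K F) := fun {s t} hs hst =>
    ⟨t / s, by rw [map_div₀, ← hst, mul_div_cancel_right₀ _ ((map_ne_zero _).mpr hs)]⟩
  by_cases h0 : k'.1 = 0
  · exact quotient (fun h0' => hk' (Prod.ext h0 h0')) h₂
  · exact quotient h0 h₁

lemma map_frameMap_injective {x y : V} (h : LinearIndependent F ![x, y]) :
    Injective (Projectivization.map (frameMap K F x y) (frameMap_injective h)) := by
  intro p p'
  induction p using Projectivization.ind with | h k hk => ?_
  induction p' using Projectivization.ind with | h k' hk' => ?_
  simp only [Projectivization.map_mk, mk_eq_mk_iff']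
  rintro ⟨a, ha⟩
  obtain ⟨b, rfl⟩ := mem_range_algebraMap_of_smul_frameMap_eq h hk' ha
  exact ⟨b, frameMap_injective h (by rw [map_smulₛₗ, ha])⟩

lemma baerSubline_eq_range {x y : V} (h : LinearIndependent F ![x, y]) :
    baerSubline K F x y =
      Set.range (Projectivization.map (frameMap K F x y) (frameMap_injective h)) := by
  ext p
  constructor
  · rintro ⟨k, hk, rfl⟩
    have hk0 : k ≠ 0 := by rintro rfl; exact hk (map_zero _)
    exact ⟨mk K k hk0, Projectivization.map_mk _ _ _ _⟩
  · rintro ⟨p, rfl⟩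
    induction p using Projectivization.ind with | h k hk => ?_
    exact ⟨k, _, (Projectivization.map_mk _ _ _ _).symm⟩

lemma ncard_baerSubline [Finite K] {x y : V} (h : LinearIndependent F ![x, y]) :
    (baerSubline K F x y).ncard = Nat.card K + 1 := by
  rw [baerSubline_eq_range h, Set.ncard_range_of_injective (map_frameMap_injective h)]
  exact Projectivization.card_of_finrank_two K (K × K) (by simp)

lemma linearIndependent_of_frameMap {x y : V} {k₁ k₂ : K × K}
    (h : LinearIndependent F ![frameMap K F x y k₁, frameMap K F x y k₂]) :
    LinearIndependent K ![k₁, k₂] := by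
  refine LinearIndependent.pair_iff.mpr fun s t hst => ?_
  have := congrArg (frameMap K F x y) hst
  rw [map_add, map_smulₛₗ, map_smulₛₗ, map_zero] at this
  obtain ⟨hs, ht⟩ := LinearIndependent.pair_iff.mp h _ _ this
  exact ⟨(map_eq_zero _).mp hs, (map_eq_zero _).mp ht⟩

lemma baerSubline_subset {x y u w : V} (huw : LinearIndependent F ![u, w])
    (hu : u ≠ 0) (hw : w ≠ 0) (hs : u + w ≠ 0)
    (h₁ : mk F u hu ∈ baerSubline K F x y) (h₂ : mk F w hw ∈ baerSubline K F x y)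
    (h₃ : mk F (u + w) hs ∈ baerSubline K F x y) :
    baerSubline K F u w ⊆ baerSubline K F x y := by
  set φ := frameMap K F x y
  obtain ⟨k₁, hk₁, h₁⟩ := h₁
  obtain ⟨k₂, hk₂, h₂⟩ := h₂
  obtain ⟨k₃, hk₃, h₃⟩ := h₃
  obtain ⟨c₁, rfl⟩ := (mk_eq_mk_iff' F _ _ hu hk₁).mp h₁.symm
  obtain ⟨c₂, rfl⟩ := (mk_eq_mk_iff' F _ _ hw hk₂).mp h₂.symm
  obtain ⟨c₃, hc₃⟩ := (mk_eq_mk_iff' F _ _ hs hk₃).mp h₃.symm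
  have hc₁ : c₁ ≠ 0 := left_ne_zero_of_smul hu
  have hc₂ : c₂ ≠ 0 := left_ne_zero_of_smul hw
  have hφ : LinearIndependent F ![φ k₁, φ k₂] :=
    (LinearIndependent.pair_smul_smul_iff hc₁.isUnit hc₂.isUnit).mp huw
  have hspan : Submodule.span K {k₁, k₂} = ⊤ := by
    rw [← Matrix.range_cons_cons_empty k₁ k₂ ![]]
    exact (linearIndependent_of_frameMap hφ).span_eq_top_of_card_eq_finrank (by simp)
  obtain ⟨s₁, s₂, hk₃⟩ := Submodule.mem_span_pair.mp (hspan ▸ Submodule.mem_top : k₃ ∈ _)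
  obtain ⟨e₁, e₂⟩ : c₃ * algebraMap K F s₁ = c₁ ∧ c₃ * algebraMap K F s₂ = c₂ := by
    refine hφ.eq_of_pair ?_
    rw [← hc₃, ← hk₃, map_add, map_smulₛₗ, map_smulₛₗ, smul_add, smul_smul, smul_smul]
  rintro p ⟨k, hk, rfl⟩
  have hscale : frameMap K F (c₁ • φ k₁) (c₂ • φ k₂) k =
      c₃ • φ ((k.1 * s₁) • k₁ + (k.2 * s₂) • k₂) := by
    rw [← e₁, ← e₂, map_add, map_smulₛₗ, map_smulₛₗ]
    simp only [frameMap_apply, map_mul, smul_add, smul_smul]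
    ring_nf
  have hk' : φ ((k.1 * s₁) • k₁ + (k.2 * s₂) • k₂) ≠ 0 := by
    rintro h0; rw [h0, smul_zero] at hscale; exact hk hscale
  exact ⟨_, hk', ((mk_eq_mk_iff' F _ _ hk hk').mpr ⟨c₃, hscale.symm⟩).symm⟩

lemma baerSubline_eq [Finite K] {x y u w : V} (hxy : LinearIndependent F ![x, y])
    (huw : LinearIndependent F ![u, w]) (hu : u ≠ 0) (hw : w ≠ 0) (hs : u + w ≠ 0)
    (h₁ : mk F u hu ∈ baerSubline K F x y) (h₂ : mk F w hw ∈ baerSubline K F x y)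
    (h₃ : mk F (u + w) hs ∈ baerSubline K F x y) :
    baerSubline K F u w = baerSubline K F x y :=
  Set.eq_of_subset_of_ncard_le (baerSubline_subset huw hu hw hs h₁ h₂ h₃)
    (by rw [ncard_baerSubline hxy, ncard_baerSubline huw])
    (Set.finite_of_ncard_pos (by rw [ncard_baerSubline hxy]; omega))

lemma mk_mem_baerSubline {x y v : V} (hv : v ≠ 0) (a b : K)
    (h : algebraMap K F a • x + algebraMap K F b • y = v) : mk F v hv ∈ baerSubline K F x y :=
  ⟨(a, b), by simpa only [frameMap_apply, h] using hv, by simp only [frameMap_apply, h]⟩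

lemma exists_frame (hV : finrank F V = 2) {p₁ p₂ p₃ : ℙ F V} (h₁₂ : p₁ ≠ p₂) (h₁₃ : p₁ ≠ p₃)
    (h₂₃ : p₂ ≠ p₃) :
    ∃ (u w : V) (hu : u ≠ 0) (hw : w ≠ 0) (hs : u + w ≠ 0), LinearIndependent F ![u, w] ∧
      mk F u hu = p₁ ∧ mk F w hw = p₂ ∧ mk F (u + w) hs = p₃ := by
  have hind : LinearIndependent F ![p₁.rep, p₂.rep] := by
    rw [← independent_mk_iff_LinearIndependent p₁.rep_nonzero p₂.rep_nonzero, mk_rep, mk_rep,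
      independent_pair_iff_ne]
    exact h₁₂
  have hspan : Submodule.span F {p₁.rep, p₂.rep} = ⊤ := by
    rw [← Matrix.range_cons_cons_empty p₁.rep p₂.rep ![]]
    exact hind.span_eq_top_of_card_eq_finrank (by simp [hV])
  obtain ⟨α, β, hαβ⟩ := Submodule.mem_span_pair.mp (hspan ▸ Submodule.mem_top : p₃.rep ∈ _)
  have hα : α ≠ 0 := by
    rintro rfl
    rw [zero_smul, zero_add] at hαβ
    refine h₂₃ (Eq.symm ?_)
    simpa only [mk_rep] using (mk_eq_mk_iff' F _ _ p₃.rep_nonzero p₂.rep_nonzero).mpr ⟨β, hαβ⟩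
  have hβ : β ≠ 0 := by
    rintro rfl
    rw [zero_smul, add_zero] at hαβ
    refine h₁₃ (Eq.symm ?_)
    simpa only [mk_rep] using (mk_eq_mk_iff' F _ _ p₃.rep_nonzero p₁.rep_nonzero).mpr ⟨α, hαβ⟩
  refine ⟨α • p₁.rep, β • p₂.rep, smul_ne_zero hα p₁.rep_nonzero, smul_ne_zero hβ p₂.rep_nonzero,
    hαβ ▸ p₃.rep_nonzero, (LinearIndependent.pair_smul_smul_iff hα.isUnit hβ.isUnit).mpr hind,
    ((mk_eq_mk_iff' F _ _ _ p₁.rep_nonzero).mpr ⟨α, rfl⟩).trans p₁.mk_rep,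
    ((mk_eq_mk_iff' F _ _ _ p₂.rep_nonzero).mpr ⟨β, rfl⟩).trans p₂.mk_rep,
    by simp only [hαβ, mk_rep]⟩

variable [Finite V]

variable (K F V) in
noncomputable def baerSublines : Finset (Finset (ℙ F V)) :=
  (Set.toFinite {A : Finset (ℙ F V) |
    ∃ x y : V, LinearIndependent F ![x, y] ∧ ↑A = baerSubline K F x y}).toFinset

lemma mem_baerSublines {A : Finset (ℙ F V)} :
    A ∈ baerSublines K F V ↔ ∃ x y : V, LinearIndependent F ![x, y] ∧ ↑A = baerSubline K F x y :=
  Set.Finite.mem_toFinset _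

variable (K) in
theorem isSteinerSystem_baerSublines [Finite K] (hV : finrank F V = 2) :
    IsSteinerSystem 3 (Nat.card K + 1) (baerSublines K F V) := by
  classical
  refine ⟨fun A hA => ?_, fun S hS => ?_⟩
  · obtain ⟨x, y, hxy, hA⟩ := mem_baerSublines.mp hA
    rw [← ncard_baerSubline hxy, ← hA, Set.ncard_coe_finset]
  obtain ⟨p₁, p₂, p₃, h₁₂, h₁₃, h₂₃, rfl⟩ := card_eq_three.mp hS
  obtain ⟨u, w, hu, hw, hs, huw, rfl, rfl, rfl⟩ := exists_frame hV h₁₂ h₁₃ h₂₃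
  have hframe : ∀ x y : V, (({mk F u hu, mk F w hw, mk F (u + w) hs} : Finset (ℙ F V)) : Set _) ⊆
      baerSubline K F x y ↔ mk F u hu ∈ baerSubline K F x y ∧ mk F w hw ∈ baerSubline K F x y ∧
        mk F (u + w) hs ∈ baerSubline K F x y := by
    intro x y; simp [Set.insert_subset_iff]
  set C := (Set.toFinite (baerSubline K F u w)).toFinset
  refine ⟨C, ⟨mem_baerSublines.mpr ⟨u, w, huw, by simp [C]⟩, ?_⟩, ?_⟩
  · rw [← coe_subset, Set.Finite.coe_toFinset, hframe]
    exact ⟨mk_mem_baerSubline hu 1 0 (by simp), mk_mem_baerSubline hw 0 1 (by simp),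
      mk_mem_baerSubline hs 1 1 (by simp)⟩
  · rintro A ⟨hA, hSA⟩
    obtain ⟨x, y, hxy, hAxy⟩ := mem_baerSublines.mp hA
    rw [← coe_subset, hAxy, hframe] at hSA
    obtain ⟨h₁, h₂, h₃⟩ := hSA
    rw [← coe_inj, hAxy, Set.Finite.coe_toFinset, baerSubline_eq hxy huw hu hw hs h₁ h₂ h₃]

end Baer

theorem choose_three_sq_add_one (q : ℕ) :
    (q ^ 2 + 1).choose 3 = (q ^ 3 + q) * (q + 1).choose 3 := by
  refine Nat.eq_of_mul_eq_mul_left (Nat.factorial_pos 3) ?_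
  rw [← Nat.descFactorial_eq_factorial_mul_choose, mul_left_comm,
    ← Nat.descFactorial_eq_factorial_mul_choose]
  rcases q with _ | m
  · rfl
  have h₁ : (m + 1) ^ 2 + 1 - 2 = m * (m + 2) := by ring_nf; omega
  have h₂ : m + 1 + 1 - 2 = m := by omega
  simp only [Nat.descFactorial_succ, Nat.descFactorial_zero, h₁, h₂, Nat.add_sub_cancel,
    Nat.sub_zero]
  ring

theorem exists_isSteinerSystem_of_isPrimePow {q : ℕ} (hq : IsPrimePow q) :
    ∃ P : Finset (Finset (Fin (q ^ 2 + 1))), IsSteinerSystem 3 (q + 1) P := by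
  obtain ⟨p, n, hp, hn, rfl⟩ := hq
  have : Fact p.Prime := ⟨Nat.prime_iff.mpr hp⟩
  let K := GaloisField p n
  let F := FiniteField.Extension K p 2
  have hK : Nat.card K = p ^ n := GaloisField.card p n hn.ne'
  have hP : Nat.card (ℙ F (F × F)) = (p ^ n) ^ 2 + 1 := by
    rw [Projectivization.card_of_finrank_two F (F × F) (by simp), FiniteField.natCard_extension, hK]
  have hS := isSteinerSystem_baerSublines K (F := F) (V := F × F) (by simp)
  rw [hK] at hS
  exact ⟨_, hS.map_equiv (Finite.equivFinOfCardEq hP)⟩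

theorem inversive_plane_exists_general (q : ℕ) (hq : IsPrimePow q) :
    (∃ P : Finset (Finset (Fin (q ^ 2 + 1))),
      P.card = q ^ 3 + q ∧ (∀ A ∈ P, A.card = q + 1) ∧
      ∀ S : Finset (Fin (q ^ 2 + 1)), S.card = 3 → ∃! A, A ∈ P ∧ S ⊆ A) ∧
    cp (q ^ 2 + 1) 3 ≤ q ^ 3 + q := by
  obtain ⟨P, hP⟩ := exists_isSteinerSystem_of_isPrimePow hq
  have hq2 := hq.two_le
  have hcard : P.card = q ^ 3 + q := by
    have h := hP.card_mul_choose
    rw [Fintype.card_fin, choose_three_sq_add_one] at h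
    exact Nat.eq_of_mul_eq_mul_right (Nat.choose_pos (by omega)) h
  refine ⟨⟨P, hcard, hP.1, hP.2⟩, Nat.sInf_le ⟨P, ⟨fun A hA hAu => ?_, hP.2⟩, hcard⟩⟩
  have h := hP.1 A hA
  rw [hAu, card_univ, Fintype.card_fin] at h
  nlinarith

/-- for a prime power `q ≡ 3 (mod 4)` and `n = q² + 1`, there is a
family of `q³ + q` subsets of an `n`-element set, each of size `q + 1`, covering
every `3`-subset exactly once; consequently `cp(q² + 1, 3) ≤ q³ + q`. -/
theorem inversive_plane_exists (q : ℕ) (hq : IsPrimePow q) (hq4 : q % 4 = 3) :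
    (∃ P : Finset (Finset (Fin (q ^ 2 + 1))),
      P.card = q ^ 3 + q ∧ (∀ A ∈ P, A.card = q + 1) ∧
      ∀ S : Finset (Fin (q ^ 2 + 1)), S.card = 3 → ∃! A, A ∈ P ∧ S ⊆ A) ∧
    cp (q ^ 2 + 1) 3 ≤ q ^ 3 + q :=
  inversive_plane_exists_general q hq
end

section
/- cp(22, 3) = 77; that is, the minimum number of proper subsets A_1, ..., A_t ⊊ [22] such that every 3-element subset of [22] is contained in exactly one A_i equals 77. -/
/-!
The blocks of the small Witt design S(3,6,22) give a clique partition with 77 members.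

Conversely, let `P` be a clique partition of the triples of `[n]`. For a point `x`, the sets
`A \ {x}` with `x ∈ A ∈ P` partition the pairs of `[n] \ {x}`, so by the de Bruijn–Erdős
theorem `x` lies in at least `n - 1` members of `P`; hence `∑ |A| ≥ n(n - 1)`. On the other
hand `∑ C(|A|, 3) = C(n, 3)`, and `C(k, 3) ≥ 15k - 70` for every `k` (the secant of `C(·, 3)`
through `k = 6, 7`). For `n = 22` this gives `70 |P| ≥ 15 · 462 - 1540`, i.e. `|P| ≥ 77`.
-/

open Finset

theorem isCliquePartition_iff_card_filter {n r : ℕ} {P : Finset (Finset (Fin n))} :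
    IsCliquePartition n r P ↔
      (∀ A ∈ P, A ≠ univ) ∧ ∀ S : Finset (Fin n), #S = r → #{A ∈ P | S ⊆ A} = 1 := by
  simp only [IsCliquePartition, card_eq_one_iff_existsUnique, mem_filter]

def wittBlocks : Finset (Finset (Fin 22)) :=
  {{4, 7, 10, 16, 17, 21},
   {0, 17, 18, 19, 20, 21},
   {3, 5, 11, 16, 18, 21},
   {3, 6, 12, 15, 17, 21},
   {1, 8, 12, 16, 20, 21},
   {4, 8, 9, 15, 18, 21},
   {0, 1, 2, 3, 4, 21},
   {3, 7, 9, 14, 20, 21},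
   {2, 8, 11, 14, 17, 21},
   {0, 9, 10, 11, 12, 21},
   {0, 13, 14, 15, 16, 21},
   {1, 6, 10, 14, 18, 21},
   {0, 5, 6, 7, 8, 21},
   {2, 7, 12, 13, 18, 21},
   {2, 5, 10, 15, 20, 21},
   {1, 5, 9, 13, 17, 21},
   {1, 7, 11, 15, 19, 21},
   {4, 5, 12, 14, 19, 21},
   {4, 6, 11, 13, 20, 21},
   {3, 8, 10, 13, 19, 21},
   {2, 6, 9, 16, 19, 21},
   {0, 1, 5, 10, 16, 19},
   {0, 1, 6, 9, 15, 20},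
   {0, 1, 7, 12, 14, 17},
   {0, 1, 8, 11, 13, 18},
   {0, 2, 5, 9, 14, 18},
   {0, 2, 6, 10, 13, 17},
   {0, 2, 7, 11, 16, 20},
   {0, 2, 8, 12, 15, 19},
   {0, 3, 5, 12, 13, 20},
   {0, 3, 6, 11, 14, 19},
   {0, 3, 7, 10, 15, 18},
   {0, 3, 8, 9, 16, 17},
   {0, 4, 5, 11, 15, 17},
   {0, 4, 6, 12, 16, 18},
   {0, 4, 7, 9, 13, 19},
   {0, 4, 8, 10, 14, 20},
   {1, 2, 5, 6, 11, 12},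
   {1, 2, 7, 8, 9, 10},
   {1, 2, 13, 14, 19, 20},
   {1, 2, 15, 16, 17, 18},
   {1, 3, 5, 8, 14, 15},
   {1, 3, 6, 7, 13, 16},
   {1, 3, 9, 12, 18, 19},
   {1, 3, 10, 11, 17, 20},
   {1, 4, 5, 7, 18, 20},
   {1, 4, 6, 8, 17, 19},
   {1, 4, 9, 11, 14, 16},
   {1, 4, 10, 12, 13, 15},
   {2, 3, 5, 7, 17, 19},
   {2, 3, 6, 8, 18, 20},
   {2, 3, 9, 11, 13, 15},
   {2, 3, 10, 12, 14, 16},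
   {2, 4, 5, 8, 13, 16},
   {2, 4, 6, 7, 14, 15},
   {2, 4, 9, 12, 17, 20},
   {2, 4, 10, 11, 18, 19},
   {3, 4, 5, 6, 9, 10},
   {3, 4, 7, 8, 11, 12},
   {3, 4, 13, 14, 17, 18},
   {3, 4, 15, 16, 19, 20},
   {5, 6, 13, 15, 18, 19},
   {5, 6, 14, 16, 17, 20},
   {5, 7, 9, 12, 15, 16},
   {5, 7, 10, 11, 13, 14},
   {5, 8, 9, 11, 19, 20},
   {5, 8, 10, 12, 17, 18},
   {6, 7, 9, 11, 17, 18},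
   {6, 7, 10, 12, 19, 20},
   {6, 8, 9, 12, 13, 14},
   {6, 8, 10, 11, 15, 16},
   {7, 8, 13, 15, 17, 20},
   {7, 8, 14, 16, 18, 19},
   {9, 10, 13, 16, 18, 20},
   {9, 10, 14, 15, 17, 19},
   {11, 12, 13, 16, 17, 19},
   {11, 12, 14, 15, 18, 20}}

set_option maxRecDepth 10000 in
theorem card_wittBlocks : #wittBlocks = 77 := by decide

set_option maxRecDepth 10000 in
theorem card_filter_card_eq_six_wittBlocks : #{A ∈ wittBlocks | #A = 6} = 77 := by decide

theorem card_of_mem_wittBlocks {A : Finset (Fin 22)} (hA : A ∈ wittBlocks) : #A = 6 :=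
  filter_card_eq (card_filter_card_eq_six_wittBlocks.trans card_wittBlocks.symm) A hA

set_option maxRecDepth 10000 in
theorem card_filter_wittBlocks_of_lt : ∀ x y z : Fin 22, x < y → y < z →
    #{A ∈ wittBlocks | x ∈ A ∧ y ∈ A ∧ z ∈ A} = 1 := by
  decide

theorem card_filter_superset_wittBlocks {S : Finset (Fin 22)} (hS : #S = 3) :
    #{A ∈ wittBlocks | S ⊆ A} = 1 := by
  set f := S.orderEmbOfFin hS
  have hsub (A : Finset (Fin 22)) : S ⊆ A ↔ f 0 ∈ A ∧ f 1 ∈ A ∧ f 2 ∈ A := by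
    rw [← coe_subset, ← range_orderEmbOfFin S hS, Set.range_subset_iff, Fin.forall_fin_succ,
      Fin.forall_fin_succ, Fin.forall_fin_one]
    rfl
  rw [filter_congr fun A _ ↦ hsub A]
  exact card_filter_wittBlocks_of_lt _ _ _ (f.strictMono (by decide)) (f.strictMono (by decide))

theorem isCliquePartition_wittBlocks : IsCliquePartition 22 3 wittBlocks :=
  isCliquePartition_iff_card_filter.2
    ⟨fun A hA h ↦ by simpa [h] using card_of_mem_wittBlocks hA,
      fun _ ↦ card_filter_superset_wittBlocks⟩

structure IsLinearSpace {α : Type*} (V : Finset α) (L : Finset (Finset α)) : Prop where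
  ssubset : ∀ ℓ ∈ L, ℓ ⊂ V
  existsUnique : ∀ x ∈ V, ∀ y ∈ V, x ≠ y → ∃! ℓ, ℓ ∈ L ∧ x ∈ ℓ ∧ y ∈ ℓ

namespace IsLinearSpace

variable {α : Type*} [DecidableEq α] {V : Finset α} {L : Finset (Finset α)}

theorem card_le_card_filter_mem (h : IsLinearSpace V L) {p : α} (hp : p ∈ V) {ℓ : Finset α}
    (hℓ : ℓ ∈ L) (hpℓ : p ∉ ℓ) : #ℓ ≤ #{ℓ' ∈ L | p ∈ ℓ'} := by
  refine card_le_card_of_forall_subsingleton (fun q ℓ' ↦ q ∈ ℓ') (fun q hq ↦ ?_) ?_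
  · obtain ⟨ℓ', ⟨hℓ', hpℓ', hq'⟩, -⟩ :=
      h.existsUnique p hp q ((h.ssubset ℓ hℓ).subset hq) (ne_of_mem_of_not_mem hq hpℓ).symm
    exact ⟨ℓ', mem_filter.2 ⟨hℓ', hpℓ'⟩, hq'⟩
  · intro ℓ' hℓ' q hq q' hq'
    rw [mem_filter] at hℓ'
    by_contra hqq'
    have hℓ'ℓ : ℓ' = ℓ :=
      (h.existsUnique q ((h.ssubset ℓ hℓ).subset hq.1) q' ((h.ssubset ℓ hℓ).subset hq'.1)
        hqq').unique ⟨hℓ'.1, hq.2, hq'.2⟩ ⟨hℓ, hq.1, hq'.1⟩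
    exact hpℓ (hℓ'ℓ ▸ hℓ'.2)

theorem card_filter_mem_pos (h : IsLinearSpace V L) (hV : 2 ≤ #V) {p : α} (hp : p ∈ V) :
    0 < #{ℓ ∈ L | p ∈ ℓ} := by
  obtain ⟨q, hq, hqp⟩ := exists_mem_ne (show 1 < #V by omega) p
  obtain ⟨ℓ, ⟨hℓ, hpℓ, -⟩, -⟩ := h.existsUnique p hp q hq hqp.symm
  exact card_pos.2 ⟨ℓ, mem_filter.2 ⟨hℓ, hpℓ⟩⟩

theorem sum_filter_notMem_one_div_lt (h : IsLinearSpace V L) (hV : 2 ≤ #V) (hLV : #L < #V)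
    {p : α} (hp : p ∈ V) : ∑ ℓ ∈ L with p ∉ ℓ, (1 / (#L * (#V - #ℓ)) : ℚ) < 1 / #V := by
  set d := #{ℓ ∈ L | p ∈ ℓ}
  have hd : (0 : ℚ) < d := by exact_mod_cast h.card_filter_mem_pos hV hp
  have hdL : (d : ℚ) ≤ #L := by exact_mod_cast card_filter_le _ _
  have hLV' : (#L : ℚ) < #V := by exact_mod_cast hLV
  have hcard : (#{ℓ ∈ L | p ∉ ℓ} : ℚ) = #L - d := by
    rw [eq_sub_iff_add_eq']
    exact_mod_cast card_filter_add_card_filter_not (s := L) (p ∈ ·)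
  calc ∑ ℓ ∈ L with p ∉ ℓ, (1 / (#L * (#V - #ℓ)) : ℚ)
      ≤ ∑ ℓ ∈ L with p ∉ ℓ, (1 / (#L * (#V - d)) : ℚ) := by
        refine sum_le_sum fun ℓ hℓ ↦ ?_
        rw [mem_filter] at hℓ
        have hℓd : (#ℓ : ℚ) ≤ d := by exact_mod_cast h.card_le_card_filter_mem hp hℓ.1 hℓ.2
        exact one_div_le_one_div_of_le (mul_pos (hd.trans_le hdL) (by linarith))
          (mul_le_mul_of_nonneg_left (by linarith) (by positivity))
    _ = ((#L - d) / (#L * (#V - d)) : ℚ) := by rw [sum_const, nsmul_eq_mul, hcard]; ring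
    _ < 1 / #V := by
        rw [div_lt_div_iff₀ (mul_pos (hd.trans_le hdL) (by linarith)) (by linarith)]
        nlinarith [mul_lt_mul_of_pos_left hLV' hd]

/-- The de Bruijn–Erdős theorem. -/
theorem card_le_card (h : IsLinearSpace V L) (hV : 2 ≤ #V) : #V ≤ #L := by
  by_contra! hLV
  have hVne : V.Nonempty := card_pos.1 (by omega)
  have hL0 : (#L : ℚ) ≠ 0 := by
    obtain ⟨p, hp⟩ := hVne
    exact_mod_cast ((h.card_filter_mem_pos hV hp).trans_le (card_filter_le _ _)).ne'
  -- Weigh each non-incident pair `p ∉ ℓ` by `1 / (|L| (|V| - |ℓ|))`: every line carries total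
  -- weight `1 / |L|`, but if `|L| < |V|` every point carries less than `1 / |V|`.
  have hline (ℓ : Finset α) (hℓ : ℓ ∈ L) :
      ∑ p ∈ V with p ∉ ℓ, (1 / (#L * (#V - #ℓ)) : ℚ) = 1 / #L := by
    have hsplit := card_filter_add_card_filter_not (s := V) (· ∈ ℓ)
    rw [filter_mem_eq_inter, inter_eq_right.2 (h.ssubset ℓ hℓ).subset] at hsplit
    have hcard : (#{p ∈ V | p ∉ ℓ} : ℚ) = #V - #ℓ := by
      rw [eq_sub_iff_add_eq']
      exact_mod_cast hsplit
    have hℓV : (#ℓ : ℚ) < #V := by exact_mod_cast card_lt_card (h.ssubset ℓ hℓ)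
    rw [sum_const, nsmul_eq_mul, hcard]
    field_simp [(sub_pos.2 hℓV).ne']
  have hcontra : (1 : ℚ) < 1 := calc
    (1 : ℚ) = ∑ ℓ ∈ L, ∑ p ∈ V with p ∉ ℓ, (1 / (#L * (#V - #ℓ)) : ℚ) := by
        rw [sum_congr rfl hline, sum_const, nsmul_eq_mul]
        field_simp
    _ = ∑ p ∈ V, ∑ ℓ ∈ L with p ∉ ℓ, (1 / (#L * (#V - #ℓ)) : ℚ) :=
        sum_comm' fun _ _ ↦ by simp only [mem_filter]; tauto
    _ < ∑ _p ∈ V, (1 / #V : ℚ) :=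
        sum_lt_sum_of_nonempty hVne fun p hp ↦ h.sum_filter_notMem_one_div_lt hV hLV hp
    _ = 1 := by
        have hV0 : (#V : ℚ) ≠ 0 := by exact_mod_cast hVne.card_pos.ne'
        rw [sum_const, nsmul_eq_mul]
        field_simp
  exact hcontra.false

end IsLinearSpace

namespace IsCliquePartition

variable {n : ℕ} {P : Finset (Finset (Fin n))}

theorem sum_choose_card_s14 {r : ℕ} (hP : IsCliquePartition n r P) :
    ∑ A ∈ P, (#A).choose r = n.choose r := by
  calc ∑ A ∈ P, (#A).choose r = ∑ A ∈ P, #{S ∈ powersetCard r univ | S ⊆ A} := by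
        refine sum_congr rfl fun A _ ↦ ?_
        rw [← card_powersetCard]
        congr 1
        ext S
        simp [and_comm]
    _ = ∑ S ∈ powersetCard r univ, #{A ∈ P | S ⊆ A} :=
        sum_card_bipartiteAbove_eq_sum_card_bipartiteBelow _
    _ = n.choose r := by
        rw [sum_congr rfl fun S hS ↦
          (isCliquePartition_iff_card_filter.1 hP).2 S (mem_powersetCard.1 hS).2]
        simp

theorem isLinearSpace_derived (hP : IsCliquePartition n 3 P) (x : Fin n) :
    IsLinearSpace (univ.erase x) ({A ∈ P | x ∈ A}.image (·.erase x)) := by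
  constructor
  · simp only [mem_image, mem_filter]
    rintro _ ⟨A, ⟨hA, hxA⟩, rfl⟩
    refine (erase_subset_erase x (subset_univ A)).ssubset_of_ne fun hAx ↦ hP.1 A hA ?_
    rw [← insert_erase hxA, hAx, insert_erase (mem_univ x)]
  · simp only [mem_erase, mem_univ, and_true]
    intro y hy z hz hyz
    obtain ⟨A, ⟨hA, hxyzA⟩, hA_unique⟩ :=
      hP.2 {x, y, z} (card_eq_three.2 ⟨x, y, z, hy.symm, hz.symm, hyz, rfl⟩)
    simp only [insert_subset_iff, singleton_subset_iff] at hxyzA hA_unique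
    refine ⟨A.erase x, ⟨mem_image_of_mem _ (mem_filter.2 ⟨hA, hxyzA.1⟩),
      mem_erase.2 ⟨hy, hxyzA.2.1⟩, mem_erase.2 ⟨hz, hxyzA.2.2⟩⟩, ?_⟩
    simp only [mem_image, mem_filter]
    rintro _ ⟨⟨B, ⟨hB, hxB⟩, rfl⟩, hyB, hzB⟩
    rw [hA_unique B ⟨hB, hxB, (mem_erase.1 hyB).2, (mem_erase.1 hzB).2⟩]

theorem sub_one_le_card_filter_mem (hP : IsCliquePartition n 3 P) (hn : 3 ≤ n) (x : Fin n) :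
    n - 1 ≤ #{A ∈ P | x ∈ A} :=
  calc n - 1 = #(univ.erase x) := by simp
    _ ≤ #({A ∈ P | x ∈ A}.image (·.erase x)) :=
        (hP.isLinearSpace_derived x).card_le_card (by simp; omega)
    _ ≤ #{A ∈ P | x ∈ A} := card_image_le

theorem mul_sub_one_le_sum_card (hP : IsCliquePartition n 3 P) (hn : 3 ≤ n) :
    n * (n - 1) ≤ ∑ A ∈ P, #A :=
  calc n * (n - 1) = ∑ _x : Fin n, (n - 1) := by simp
    _ ≤ ∑ x, #{A ∈ P | x ∈ A} := sum_le_sum fun x _ ↦ hP.sub_one_le_card_filter_mem hn x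
    _ = ∑ A ∈ P, #{x ∈ univ | x ∈ A} := sum_card_bipartiteAbove_eq_sum_card_bipartiteBelow _
    _ = ∑ A ∈ P, #A := by simp

end IsCliquePartition

theorem fifteen_mul_le_choose_three (k : ℕ) : 15 * k ≤ 70 + k.choose 3 := by
  obtain hk | hk := lt_or_ge k 6
  · interval_cases k <;> decide
  induction k, hk using Nat.le_induction with
  | base => decide
  | succ k hk ih =>
    have h15 : 15 ≤ k.choose 2 := Nat.choose_le_choose 2 hk
    have hpascal : (k + 1).choose 3 = k.choose 2 + k.choose 3 := Nat.choose_succ_succ' k 2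
    omega

theorem IsCliquePartition.fifteen_mul_mul_sub_one_le {n : ℕ} {P : Finset (Finset (Fin n))}
    (hP : IsCliquePartition n 3 P) (hn : 3 ≤ n) :
    15 * (n * (n - 1)) ≤ 70 * #P + n.choose 3 :=
  calc 15 * (n * (n - 1)) ≤ 15 * ∑ A ∈ P, #A := by gcongr; exact hP.mul_sub_one_le_sum_card hn
    _ = ∑ A ∈ P, 15 * #A := mul_sum ..
    _ ≤ ∑ A ∈ P, (70 + (#A).choose 3) := sum_le_sum fun A _ ↦ fifteen_mul_le_choose_three _
    _ = 70 * #P + n.choose 3 := by rw [sum_add_distrib, hP.sum_choose_card_s14]; simp [mul_comm]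

/-- `cp(22, 3) = 77`. -/
theorem cp_22_3 : cp 22 3 = 77 := by
  have h77 : 77 ∈ {t | ∃ P : Finset (Finset (Fin 22)), IsCliquePartition 22 3 P ∧ P.card = t} :=
    ⟨wittBlocks, isCliquePartition_wittBlocks, card_wittBlocks⟩
  refine le_antisymm (Nat.sInf_le h77) (le_csInf ⟨77, h77⟩ ?_)
  rintro t ⟨P, hP, rfl⟩
  have hbound := hP.fifteen_mul_mul_sub_one_le (by norm_num)
  have hchoose : Nat.choose 22 3 = 1540 := rfl
  omega
end

section
/- cp(21, 3) = 77; that is, the minimum number of proper subsets A_1, ..., A_t ⊊ [21] such that every 3-element subset of [21] is contained in exactly one A_i equals 77. -/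
open Finset

variable {n : ℕ}

/-- Blocks with at most two points cover no triple and are left out. -/
def blocksThrough (P : Finset (Finset (Fin n))) (p : Finset (Fin n)) : Finset (Finset (Fin n)) :=
  {A ∈ P | 3 ≤ #A ∧ p ⊆ A}

def pairWeight (P : Finset (Finset (Fin n))) (p : Finset (Fin n)) : ℚ :=
  ∑ A ∈ blocksThrough P p, ((#A).choose 2 : ℚ)⁻¹

section

variable {P : Finset (Finset (Fin n))} {A p : Finset (Fin n)}

theorem mem_blocksThrough : A ∈ blocksThrough P p ↔ A ∈ P ∧ 3 ≤ #A ∧ p ⊆ A :=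
  mem_filter

theorem pairWeight_nonneg : 0 ≤ pairWeight P p :=
  sum_nonneg fun _ _ => by positivity

theorem card_filter_eq_sum_pairWeight (P : Finset (Finset (Fin n))) :
    (#{A ∈ P | 3 ≤ #A} : ℚ) = ∑ p ∈ powersetCard 2 univ, pairWeight P p := by
  simp only [pairWeight, blocksThrough]
  rw [sum_comm' (t' := {A ∈ P | 3 ≤ #A}) (s' := fun A => powersetCard 2 A), card_eq_sum_ones,
    Nat.cast_sum]
  · refine sum_congr rfl fun A hA => ?_
    have : ((#A).choose 2 : ℚ) ≠ 0 := by
      have := (mem_filter.1 hA).2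
      exact_mod_cast (Nat.choose_pos (by omega)).ne'
    rw [sum_const, card_powersetCard, nsmul_eq_mul, mul_inv_cancel₀ this, Nat.cast_one]
  · intro p A
    simp only [mem_filter, mem_powersetCard, subset_univ, true_and]
    tauto

end

theorem card_mul_card_compl_le_card_filter {α : Type*} [Fintype α] [DecidableEq α]
    (s : Finset α) : #s * #sᶜ ≤ #{p ∈ powersetCard 2 univ | #(p ∩ s) = 1} := by
  rw [← card_product]
  refine card_le_card_of_injOn (fun q => {q.1, q.2}) (fun q hq => ?_) fun q hq q' hq' h => ?_
  · obtain ⟨hx, hy⟩ := mem_product.1 hq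
    have hy' := mem_compl.1 hy
    rw [coe_filter, Set.mem_ofPred_eq, mem_powersetCard, card_pair (ne_of_mem_of_not_mem hx hy'),
      insert_inter_of_mem hx, singleton_inter_of_notMem hy']
    exact ⟨⟨subset_univ _, rfl⟩, card_singleton _⟩
  · simp only [coe_product, Set.mem_prod, mem_coe, mem_compl] at hq hq' h
    have hx : q.1 ∈ ({q'.1, q'.2} : Finset α) := h ▸ mem_insert_self _ _
    have hy : q.2 ∈ ({q'.1, q'.2} : Finset α) := h ▸ mem_insert_of_mem (mem_singleton_self _)
    rw [mem_insert, mem_singleton] at hx hy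
    refine Prod.ext (hx.resolve_right ?_) (hy.resolve_left ?_)
    · exact fun h => hq'.2 (h ▸ hq.1)
    · exact fun h => hq.2 (h ▸ hq'.1)

theorem le_sum_powersetCard_two (f : Finset (Fin n) → ℚ) (A₀ : Finset (Fin n)) {b B : ℚ}
    (hbB : b ≤ B) (hall : ∀ p ∈ powersetCard 2 univ, b ≤ f p)
    (hside : ∀ p ∈ powersetCard 2 univ, #(p ∩ A₀) = 1 → B ≤ f p) :
    n.choose 2 * b + (#A₀ * (n - #A₀) : ℕ) * (B - b) ≤ ∑ p ∈ powersetCard 2 univ, f p := by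
  have hcount := card_mul_card_compl_le_card_filter A₀
  rw [card_compl, Fintype.card_fin] at hcount
  calc n.choose 2 * b + (#A₀ * (n - #A₀) : ℕ) * (B - b)
      ≤ n.choose 2 * b + #{p ∈ powersetCard 2 univ | #(p ∩ A₀) = 1} * (B - b) := by
        gcongr
    _ = ∑ p ∈ powersetCard 2 univ, (b + if #(p ∩ A₀) = 1 then B - b else 0) := by
        rw [sum_add_distrib, ← sum_filter, sum_const, sum_const, card_powersetCard, card_univ,
          Fintype.card_fin, nsmul_eq_mul, nsmul_eq_mul]
    _ ≤ ∑ p ∈ powersetCard 2 univ, f p := sum_le_sum fun p hp => by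
        split_ifs with h
        · linarith [hside p hp h]
        · linarith [hall p hp]

/-- The chord of the convex function `a ↦ 1/C(a,2)` through `a = 5` and `a = 6`. -/
theorem chord_five_six_le_inv_choose_two {a : ℕ} (ha : 3 ≤ a) :
    1 / 5 - 1 / 30 * ((a : ℚ) - 2) ≤ (a.choose 2 : ℚ)⁻¹ := by
  rcases le_or_gt a 7 with h | h
  · interval_cases a <;> norm_num [Nat.choose]
  · have : (8 : ℚ) ≤ a := by exact_mod_cast h
    have : (0 : ℚ) ≤ (a.choose 2 : ℚ)⁻¹ := by positivity
    linarith

/-- The chord of the convex function `a ↦ 1/C(a,2)` through `a = 6` and `a = 7`. -/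
theorem chord_six_seven_le_inv_choose_two {a : ℕ} (ha : 3 ≤ a) :
    1 / 7 - 2 / 105 * ((a : ℚ) - 2) ≤ (a.choose 2 : ℚ)⁻¹ := by
  rcases le_or_gt a 9 with h | h
  · interval_cases a <;> norm_num [Nat.choose]
  · have : (10 : ℚ) ≤ a := by exact_mod_cast h
    have : (0 : ℚ) ≤ (a.choose 2 : ℚ)⁻¹ := by positivity
    linarith

namespace IsCliquePartition

variable {r : ℕ} {P : Finset (Finset (Fin n))} {A B A₀ p : Finset (Fin n)}

theorem card_inter_lt (hP : IsCliquePartition n r P) (hA : A ∈ P) (hB : B ∈ P) (hAB : A ≠ B) :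
    #(A ∩ B) < r := by
  by_contra! h
  obtain ⟨S, hS, hSr⟩ := exists_subset_card_eq h
  obtain ⟨C, -, hC⟩ := hP.2 S hSr
  exact hAB <| (hC A ⟨hA, hS.trans inter_subset_left⟩).trans
    (hC B ⟨hB, hS.trans inter_subset_right⟩).symm

theorem existsUnique_mem_blocksThrough (hP : IsCliquePartition n 3 P) (hp : #p = 2) {z : Fin n}
    (hz : z ∉ p) : ∃! A, A ∈ blocksThrough P p ∧ z ∈ A := by
  have hzp : #(insert z p) = 3 := by rw [card_insert_of_notMem hz, hp]
  refine (existsUnique_congr fun A => ?_).1 (hP.2 _ hzp)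
  rw [mem_blocksThrough, insert_subset_iff]
  constructor
  · rintro ⟨hA, hzA, hpA⟩
    exact ⟨⟨hA, hzp ▸ card_le_card (insert_subset hzA hpA), hpA⟩, hzA⟩
  · rintro ⟨⟨hA, -, hpA⟩, hzA⟩
    exact ⟨hA, hzA, hpA⟩

theorem sum_card_sub_two_blocksThrough (hP : IsCliquePartition n 3 P) (hp : #p = 2) :
    ∑ A ∈ blocksThrough P p, (#A - 2) = n - 2 := by
  have hcover : ∀ z ∈ pᶜ, #{A ∈ blocksThrough P p | z ∈ A} = 1 := fun z hz => by
    rw [card_eq_one_iff_existsUnique]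
    simpa only [mem_filter] using hP.existsUnique_mem_blocksThrough hp (mem_compl.1 hz)
  calc ∑ A ∈ blocksThrough P p, (#A - 2) = ∑ A ∈ blocksThrough P p, #(pᶜ ∩ A) := by
        refine sum_congr rfl fun A hA => ?_
        rw [← hp, ← card_sdiff_of_subset (mem_blocksThrough.1 hA).2.2, sdiff_eq_inter_compl,
          inter_comm]
    _ = n - 2 := by rw [sum_card_inter hcover, card_compl, Fintype.card_fin, hp, mul_one]

theorem sub_two_le_card_blocksThrough_mul (hP : IsCliquePartition n 3 P) (hp : #p = 2) {M : ℕ}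
    (hM : ∀ A ∈ P, #A ≤ M) : n - 2 ≤ #(blocksThrough P p) * (M - 2) := by
  rw [← hP.sum_card_sub_two_blocksThrough hp, ← smul_eq_mul]
  exact sum_le_card_nsmul _ _ _ fun A hA =>
    Nat.sub_le_sub_right (hM A (mem_blocksThrough.1 hA).1) 2

theorem sub_le_pairWeight (hP : IsCliquePartition n 3 P) (hp : #p = 2) (c d : ℚ)
    (h : ∀ A ∈ blocksThrough P p, c - d * (#A - 2) ≤ ((#A).choose 2 : ℚ)⁻¹) :
    #(blocksThrough P p) * c - d * (n - 2) ≤ pairWeight P p := by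
  have h2n : 2 ≤ n := by simpa [hp] using card_le_univ p
  have hsum : ∑ A ∈ blocksThrough P p, ((#A : ℚ) - 2) = n - 2 := by
    have := congrArg (Nat.cast (R := ℚ)) (hP.sum_card_sub_two_blocksThrough hp)
    rw [Nat.cast_sum, Nat.cast_sub h2n, Nat.cast_ofNat] at this
    rw [← this]
    refine sum_congr rfl fun A hA => ?_
    have := (mem_blocksThrough.1 hA).2.1
    push_cast [Nat.cast_sub (by omega : 2 ≤ #A)]
    rfl
  calc #(blocksThrough P p) * c - d * (n - 2)
      = ∑ A ∈ blocksThrough P p, (c - d * (#A - 2)) := by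
        rw [sum_sub_distrib, ← mul_sum, hsum, sum_const, nsmul_eq_mul]
    _ ≤ pairWeight P p := sum_le_sum h

theorem ne_of_mem_blocksThrough (hp : #p = 2) (hA₀p : #(p ∩ A₀) = 1)
    (hA : A ∈ blocksThrough P p) : A ≠ A₀ := by
  rintro rfl
  rw [inter_eq_left.2 (mem_blocksThrough.1 hA).2.2, hp] at hA₀p
  exact absurd hA₀p (by decide)

theorem card_sub_one_le_card_blocksThrough (hP : IsCliquePartition n 3 P) (hp : #p = 2)
    (hA₀ : A₀ ∈ P) (hA₀p : #(p ∩ A₀) = 1) : #A₀ - 1 ≤ #(blocksThrough P p) := by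
  obtain ⟨x, hx⟩ := card_eq_one.1 hA₀p
  obtain ⟨hxp, hxA₀⟩ := mem_inter.1 (hx ▸ mem_singleton_self x)
  have hcover : ∀ z ∈ A₀ \ p, 1 ≤ #{A ∈ blocksThrough P p | z ∈ A} := fun z hz =>
    card_pos.2 ⟨_, mem_filter.2
      (hP.existsUnique_mem_blocksThrough hp (mem_sdiff.1 hz).2).exists.choose_spec⟩
  -- `A` meets `A₀` in at most two points, one of which is `x ∈ p`
  have hmeet : ∀ A ∈ blocksThrough P p, #((A₀ \ p) ∩ A) ≤ 1 := by
    intro A hA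
    obtain ⟨hAP, -, hpA⟩ := mem_blocksThrough.1 hA
    have h3 := hP.card_inter_lt hAP hA₀ (ne_of_mem_blocksThrough hp hA₀p hA)
    have hsub : (A₀ \ p) ∩ A ⊆ (A ∩ A₀).erase x := fun z hz => by
      simp only [mem_inter, mem_sdiff] at hz
      exact mem_erase.2 ⟨fun h => hz.1.2 (h ▸ hxp), mem_inter.2 ⟨hz.2, hz.1.1⟩⟩
    have := card_le_card hsub
    rw [card_erase_of_mem (mem_inter.2 ⟨hpA hxp, hxA₀⟩)] at this
    omega
  calc #A₀ - 1 = #(A₀ \ p) * 1 := by rw [mul_one, card_sdiff, hA₀p]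
    _ ≤ ∑ A ∈ blocksThrough P p, #((A₀ \ p) ∩ A) := le_sum_card_inter hcover
    _ ≤ ∑ _A ∈ blocksThrough P p, 1 := sum_le_sum hmeet
    _ = #(blocksThrough P p) := (card_eq_sum_ones _).symm

theorem card_add_card_le_of_mem_blocksThrough (hP : IsCliquePartition n 3 P) (hp : #p = 2)
    (hA₀ : A₀ ∈ P) (hA₀p : #(p ∩ A₀) = 1) (hA : A ∈ blocksThrough P p) : #A + #A₀ ≤ n + 2 := by
  have h3 := hP.card_inter_lt (mem_blocksThrough.1 hA).1 hA₀ (ne_of_mem_blocksThrough hp hA₀p hA)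
  have hunion : #(A ∪ A₀) ≤ n := by simpa using card_le_univ (A ∪ A₀)
  have := card_union_add_card_inter A A₀
  omega

theorem card_div_five_sub_le_pairWeight (hP : IsCliquePartition n 3 P) (hp : #p = 2) :
    #(blocksThrough P p) / 5 - ((n : ℚ) - 2) / 30 ≤ pairWeight P p := by
  have := hP.sub_le_pairWeight hp _ _ fun A hA =>
    chord_five_six_le_inv_choose_two (mem_blocksThrough.1 hA).2.1
  linarith

theorem card_div_seven_sub_le_pairWeight (hP : IsCliquePartition n 3 P) (hp : #p = 2) :
    #(blocksThrough P p) / 7 - 2 * ((n : ℚ) - 2) / 105 ≤ pairWeight P p := by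
  have := hP.sub_le_pairWeight hp _ _ fun A hA =>
    chord_six_seven_le_inv_choose_two (mem_blocksThrough.1 hA).2.1
  linarith

end IsCliquePartition

namespace IsCliquePartition

variable {P : Finset (Finset (Fin 21))} {A₀ : Finset (Fin 21)}

theorem le_sum_pairWeight_of_le_six (hP : IsCliquePartition 21 3 P) {M : ℕ}
    (hM : ∀ A ∈ P, #A ≤ M) (h6 : M ≤ 6) :
    77 ≤ ∑ p ∈ powersetCard 2 univ, pairWeight P p := by
  have hall : ∀ p ∈ powersetCard 2 (univ : Finset (Fin 21)), 11 / 30 ≤ pairWeight P p := by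
    intro p hp
    have hp2 := (mem_powersetCard.1 hp).2
    have hk := hP.sub_two_le_card_blocksThrough_mul hp2 hM
    have hk' := Nat.mul_le_mul_left #(blocksThrough P p) (Nat.sub_le_sub_right h6 2)
    have hk5 : (5 : ℚ) ≤ #(blocksThrough P p) := by exact_mod_cast (by omega : 5 ≤ _)
    have := hP.card_div_five_sub_le_pairWeight hp2
    norm_num at this
    linarith
  calc (77 : ℚ) = #(powersetCard 2 (univ : Finset (Fin 21))) • (11 / 30) := by
        simp [Nat.choose_two_right]
        norm_num
    _ ≤ _ := card_nsmul_le_sum _ _ _ hall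

theorem le_sum_pairWeight_of_card_eq_seven (hP : IsCliquePartition 21 3 P) (hA₀ : A₀ ∈ P)
    (hmax : ∀ A ∈ P, #A ≤ #A₀) (h7 : #A₀ = 7) :
    77 ≤ ∑ p ∈ powersetCard 2 univ, pairWeight P p := by
  have hall : ∀ p ∈ powersetCard 2 (univ : Finset (Fin 21)), 22 / 105 ≤ pairWeight P p := by
    intro p hp
    have hp2 := (mem_powersetCard.1 hp).2
    have hk := hP.sub_two_le_card_blocksThrough_mul hp2 hmax
    rw [h7] at hk
    have hk4 : (4 : ℚ) ≤ #(blocksThrough P p) := by exact_mod_cast (by omega : 4 ≤ _)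
    have := hP.card_div_seven_sub_le_pairWeight hp2
    norm_num at this
    linarith
  have hside : ∀ p ∈ powersetCard 2 (univ : Finset (Fin 21)), #(p ∩ A₀) = 1 →
      17 / 30 ≤ pairWeight P p := by
    intro p hp hA₀p
    have hp2 := (mem_powersetCard.1 hp).2
    have hk := hP.card_sub_one_le_card_blocksThrough hp2 hA₀ hA₀p
    rw [h7] at hk
    have hk6 : (6 : ℚ) ≤ #(blocksThrough P p) := by exact_mod_cast hk
    have := hP.card_div_five_sub_le_pairWeight hp2
    norm_num at this
    linarith
  have := le_sum_powersetCard_two _ A₀ (by norm_num) hall hside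
  rw [h7] at this
  norm_num [Nat.choose_two_right] at this
  linarith

theorem le_sum_pairWeight_of_eight_le_card_le_nineteen (hP : IsCliquePartition 21 3 P)
    (hA₀ : A₀ ∈ P) (h8 : 8 ≤ #A₀) (h19 : #A₀ ≤ 19) :
    77 ≤ ∑ p ∈ powersetCard 2 univ, pairWeight P p := by
  have hside : ∀ p ∈ powersetCard 2 (univ : Finset (Fin 21)), #(p ∩ A₀) = 1 →
      ((#A₀ : ℚ) - 1) / 5 - 19 / 30 ≤ pairWeight P p := by
    intro p hp hA₀p
    have hp2 := (mem_powersetCard.1 hp).2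
    have hk : (#A₀ : ℚ) - 1 ≤ #(blocksThrough P p) := by
      have := hP.card_sub_one_le_card_blocksThrough hp2 hA₀ hA₀p
      rw [← Nat.cast_one, ← Nat.cast_sub (by omega)]
      exact_mod_cast this
    have := hP.card_div_five_sub_le_pairWeight hp2
    norm_num at this
    linarith
  have hB : (0 : ℚ) ≤ ((#A₀ : ℚ) - 1) / 5 - 19 / 30 := by
    have : (8 : ℚ) ≤ #A₀ := by exact_mod_cast h8
    linarith
  have := le_sum_powersetCard_two _ A₀ hB (fun _ _ => pairWeight_nonneg) hside
  refine le_trans ?_ this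
  interval_cases #A₀ <;> norm_num

theorem le_sum_pairWeight_of_card_eq_twenty (hP : IsCliquePartition 21 3 P) (hA₀ : A₀ ∈ P)
    (h20 : #A₀ = 20) : 77 ≤ ∑ p ∈ powersetCard 2 univ, pairWeight P p := by
  have hside : ∀ p ∈ powersetCard 2 (univ : Finset (Fin 21)), #(p ∩ A₀) = 1 →
      19 / 3 ≤ pairWeight P p := by
    intro p hp hA₀p
    have hp2 := (mem_powersetCard.1 hp).2
    have hk := hP.card_sub_one_le_card_blocksThrough hp2 hA₀ hA₀p
    rw [h20] at hk
    have hk19 : (19 : ℚ) ≤ #(blocksThrough P p) := by exact_mod_cast hk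
    -- the blocks through `p` are triangles
    have := hP.sub_le_pairWeight hp2 (1 / 3) 0 fun A hA => by
      have := hP.card_add_card_le_of_mem_blocksThrough hp2 hA₀ hA₀p hA
      rw [show #A = 3 by have := (mem_blocksThrough.1 hA).2.1; omega]
      norm_num
    linarith
  have := le_sum_powersetCard_two _ A₀ (by norm_num) (fun _ _ => pairWeight_nonneg) hside
  rw [h20] at this
  norm_num at this
  linarith

theorem seventy_seven_le_card (hP : IsCliquePartition 21 3 P) : 77 ≤ #P := by
  obtain ⟨B, ⟨hB, -⟩, -⟩ := hP.2 {0, 1, 2} (by decide)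
  obtain ⟨A₀, hA₀, hmax⟩ := exists_max_image P card ⟨B, hB⟩
  have h20 : #A₀ ≤ 20 := by
    have := (card_lt_iff_ne_univ A₀).2 (hP.1 A₀ hA₀)
    simp only [Fintype.card_fin] at this
    omega
  have hsum : (77 : ℚ) ≤ ∑ p ∈ powersetCard 2 univ, pairWeight P p := by
    rcases (by omega : #A₀ ≤ 6 ∨ #A₀ = 7 ∨ 8 ≤ #A₀ ∧ #A₀ ≤ 19 ∨ #A₀ = 20) with h | h | h | h
    · exact hP.le_sum_pairWeight_of_le_six hmax h
    · exact hP.le_sum_pairWeight_of_card_eq_seven hA₀ hmax h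
    · exact hP.le_sum_pairWeight_of_eight_le_card_le_nineteen hA₀ h.1 h.2
    · exact hP.le_sum_pairWeight_of_card_eq_twenty hA₀ h
  rw [← card_filter_eq_sum_pairWeight] at hsum
  exact (by exact_mod_cast hsum : 77 ≤ #{A ∈ P | 3 ≤ #A}).trans (card_filter_le P _)

end IsCliquePartition

theorem isCliquePartition_three_of_card_filter {P : Finset (Finset (Fin n))}
    (hP : univ ∉ P)
    (h : ∀ x y z : Fin n, x < y → y < z → #{A ∈ P | x ∈ A ∧ y ∈ A ∧ z ∈ A} = 1) :
    IsCliquePartition n 3 P := by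
  refine ⟨fun A hA hAu => hP (hAu ▸ hA), fun S hS => ?_⟩
  set f := S.orderEmbOfFin hS
  have hSf : ∀ A : Finset (Fin n), S ⊆ A ↔ f 0 ∈ A ∧ f 1 ∈ A ∧ f 2 ∈ A := fun A => by
    rw [← coe_subset, ← range_orderEmbOfFin S hS, Set.range_subset_iff, Fin.forall_fin_succ,
      Fin.forall_fin_succ, Fin.forall_fin_one]
    rfl
  have := h (f 0) (f 1) (f 2) (f.strictMono (by decide)) (f.strictMono (by decide))
  simp_rw [← hSf, card_eq_one_iff_existsUnique, mem_filter] at this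
  exact this

/-- The 21 five-point blocks are the lines of `PG(2,4)`, the 56 six-point blocks one class of
its hyperovals. -/
def linesAndHyperovals : Finset (Finset (Fin 21)) :=
  {{1,5,9,13,17}, {0,5,6,7,8}, {2,5,10,15,20}, {4,5,12,14,19}, {3,5,11,16,18},
   {0,1,2,3,4}, {1,6,10,14,18}, {1,8,12,16,20}, {1,7,11,15,19}, {0,9,10,11,12},
   {2,6,9,16,19}, {4,8,9,15,18}, {3,7,9,14,20}, {0,17,18,19,20}, {3,6,12,15,17},
   {2,8,11,14,17}, {4,7,10,16,17}, {0,13,14,15,16}, {4,6,11,13,20}, {3,8,10,13,19},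
   {2,7,12,13,18},
   {2,4,9,12,17,20}, {0,2,8,12,15,19}, {0,1,6,9,15,20}, {3,4,5,6,9,10}, {1,4,6,8,17,19},
   {2,3,6,8,18,20}, {5,8,10,12,17,18}, {1,4,10,12,13,15}, {0,2,5,9,14,18}, {6,7,10,12,19,20},
   {0,2,7,11,16,20}, {1,4,9,11,14,16}, {0,4,8,10,14,20}, {1,4,5,7,18,20}, {0,3,7,10,15,18},
   {3,4,13,14,17,18}, {6,7,9,11,17,18}, {0,1,8,11,13,18}, {0,1,7,12,14,17}, {1,2,7,8,9,10},
   {2,4,10,11,18,19}, {0,2,6,10,13,17}, {0,4,6,12,16,18}, {0,3,6,11,14,19}, {0,4,7,9,13,19},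
   {2,4,6,7,14,15}, {2,4,5,8,13,16}, {2,3,5,7,17,19}, {1,2,15,16,17,18}, {11,12,13,16,17,19},
   {0,4,5,11,15,17}, {5,8,9,11,19,20}, {3,4,15,16,19,20}, {6,8,10,11,15,16}, {9,10,13,16,18,20},
   {2,3,10,12,14,16}, {5,7,10,11,13,14}, {5,6,14,16,17,20}, {3,4,7,8,11,12}, {6,8,9,12,13,14},
   {11,12,14,15,18,20}, {5,7,9,12,15,16}, {1,3,6,7,13,16}, {5,6,13,15,18,19}, {1,3,10,11,17,20},
   {0,1,5,10,16,19}, {0,3,8,9,16,17}, {7,8,14,16,18,19}, {7,8,13,15,17,20}, {2,3,9,11,13,15},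
   {1,3,9,12,18,19}, {1,2,13,14,19,20}, {0,3,5,12,13,20}, {9,10,14,15,17,19}, {1,3,5,8,14,15},
   {1,2,5,6,11,12}}

set_option maxRecDepth 10000 in
theorem card_linesAndHyperovals : #linesAndHyperovals = 77 := by
  decide

set_option maxRecDepth 10000 in
theorem isCliquePartition_linesAndHyperovals : IsCliquePartition 21 3 linesAndHyperovals :=
  isCliquePartition_three_of_card_filter (by decide) (by decide)

/-- `cp(21, 3) = 77`. -/
theorem cp_21_3 : cp 21 3 = 77 :=
  IsLeast.csInf_eq ⟨⟨_, isCliquePartition_linesAndHyperovals, card_linesAndHyperovals⟩,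
    fun _ ⟨_, hP, hcard⟩ => hcard ▸ hP.seventy_seven_le_card⟩
end

section
/- Let n > k ≥ r ≥ 2 be integers such that m = C(n, r)/C(k, r) is a positive integer. Then there exists a partition of the r-element subsets of [n] into m cliques of size k (i.e., m subsets of [n], each of size k, such that every r-element subset of [n] lies in exactly one of them) if and only if z(m, n, 2, r) = km. -/
/-- The Zarankiewicz number `zar m n r = z(m, n, 2, r)`: the maximum number of
edges in a bipartite graph with parts of sizes `m` and `n` in which no two
vertices of the first part have `r` common neighbors in the second part. -/
noncomputable def zar (m n r : ℕ) : ℕ :=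
  sSup {e | ∃ E : Finset (Fin m × Fin n),
    (∀ a a' : Fin m, a ≠ a' →
      (Finset.univ.filter (fun b : Fin n => (a, b) ∈ E ∧ (a', b) ∈ E)).card < r) ∧
    E.card = e}

/-!
Read a bipartite graph as the family of neighbourhoods `N a ⊆ [n]`, `a ∈ [m]`. Having no
`K_{2,r}` means that the `N a` pairwise meet in fewer than `r` points, so their families of
`r`-subsets are disjoint and `∑ C(|N a|, r) ≤ C(n, r) = m C(k, r)`. As `C(·, r)` is discretely
convex it lies above a line of slope `C(k - 1, r - 1)` touching it at `k`, so
`∑ |N a| ≤ k m`; for `r ≥ 2` it lies strictly above that line right of `k`, so `k m` edges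
force `|N a| = k` for all `a`. Then the `r`-subsets of the `N a` exhaust all `r`-subsets
of `[n]`, and the `N a` are the blocks of the partition. Conversely, the blocks of a partition,
used as neighbourhoods, give a `K_{2,r}`-free graph with `k m` edges.
-/

open Finset

namespace Nat

theorem choose_add_mul_choose_le_choose_add (k t s : ℕ) :
    k.choose (s + 1) + t * k.choose s ≤ (k + t).choose (s + 1) := by
  induction t with
  | zero => simp
  | succ t ih =>
    have := choose_le_choose s (le_add_right k t)
    rw [← add_assoc, choose_succ_succ']
    linarith

theorem choose_add_le_choose_add_mul_choose (d t s : ℕ) :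
    (d + t).choose (s + 1) ≤ d.choose (s + 1) + t * (d + t - 1).choose s := by
  induction t with
  | zero => simp
  | succ t ih =>
    have := Nat.mul_le_mul_left t (choose_le_choose s (sub_le (d + t) 1))
    rw [← add_assoc, choose_succ_succ', add_tsub_cancel_right]
    linarith

/-- `d ↦ C(d, r)` lies above the line through `(k - 1, C(k - 1, r))` and `(k, C(k, r))`. -/
theorem choose_add_mul_le_choose_add_mul {r : ℕ} (hr : 0 < r) (k d : ℕ) :
    k.choose r + d * (k - 1).choose (r - 1) ≤ d.choose r + k * (k - 1).choose (r - 1) := by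
  obtain ⟨s, rfl⟩ := exists_eq_add_one.2 hr
  rw [add_tsub_cancel_right]
  rcases le_total k d with h | h
  · obtain ⟨t, rfl⟩ := exists_add_of_le h
    have := Nat.mul_le_mul_left t (choose_le_choose s (sub_le k 1))
    have := choose_add_mul_choose_le_choose_add k t s
    linarith
  · obtain ⟨t, rfl⟩ := exists_add_of_le h
    have := choose_add_le_choose_add_mul_choose d t s
    linarith

theorem choose_add_mul_lt_choose_add_mul {r k d : ℕ} (hr : 2 ≤ r) (hk : r ≤ k) (hd : k < d) :
    k.choose r + d * (k - 1).choose (r - 1) < d.choose r + k * (k - 1).choose (r - 1) := by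
  obtain ⟨s, rfl⟩ : ∃ s, r = s + 1 + 1 := ⟨r - 2, by omega⟩
  obtain ⟨j, rfl⟩ : ∃ j, k = j + 1 := ⟨k - 1, by omega⟩
  obtain ⟨t, rfl⟩ := Nat.exists_eq_add_of_lt hd
  have hslope : j.choose (s + 1) < (j + 1).choose (s + 1) := by
    rw [choose_succ_succ']
    have := choose_pos (show s ≤ j by omega)
    omega
  have := Nat.mul_lt_mul_of_pos_left hslope t.add_one_pos
  have := choose_add_mul_choose_le_choose_add (j + 1) (t + 1) (s + 1)
  rw [← add_assoc] at this
  simp only [add_tsub_cancel_right]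
  linarith

end Nat

section DiscreteJensen

variable {ι : Type*} {s : Finset ι} {d : ι → ℕ} {r k : ℕ}

theorem sum_le_card_mul_of_sum_choose_le (hr : 0 < r) (hk : r ≤ k)
    (h : ∑ i ∈ s, (d i).choose r ≤ #s * k.choose r) : ∑ i ∈ s, d i ≤ #s * k := by
  have hslope : 0 < (k - 1).choose (r - 1) := Nat.choose_pos (by omega)
  have htangent := sum_le_sum fun i (_ : i ∈ s) => Nat.choose_add_mul_le_choose_add_mul hr k (d i)
  simp only [sum_add_distrib, sum_const, smul_eq_mul, ← sum_mul] at htangent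
  refine le_of_mul_le_mul_right ?_ hslope
  linarith

theorem eq_of_sum_choose_le_of_sum_eq (hr : 2 ≤ r) (hk : r ≤ k)
    (h : ∑ i ∈ s, (d i).choose r ≤ #s * k.choose r) (hsum : ∑ i ∈ s, d i = #s * k) :
    ∀ i ∈ s, d i = k := by
  have hle : ∀ i ∈ s, d i ≤ k := by
    by_contra! ⟨j, hj, hkj⟩
    have htangent : ∑ i ∈ s, (k.choose r + d i * (k - 1).choose (r - 1)) <
        ∑ i ∈ s, ((d i).choose r + k * (k - 1).choose (r - 1)) :=
      sum_lt_sum (fun i _ => Nat.choose_add_mul_le_choose_add_mul (by omega) k (d i))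
        ⟨j, hj, Nat.choose_add_mul_lt_choose_add_mul hr hk hkj⟩
    simp only [sum_add_distrib, sum_const, smul_eq_mul, ← sum_mul, hsum] at htangent
    linarith
  rw [← smul_eq_mul, ← sum_const] at hsum
  exact (sum_eq_sum_iff_of_le hle).1 hsum

end DiscreteJensen

section Packing

variable {β : Type*} [DecidableEq β] {r : ℕ}

theorem disjoint_powersetCard_of_card_inter_lt {s t : Finset β} (h : #(s ∩ t) < r) :
    Disjoint (s.powersetCard r) (t.powersetCard r) := by
  refine disjoint_left.2 fun S hs ht => ?_
  rw [mem_powersetCard] at hs ht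
  have := card_le_card (subset_inter hs.1 ht.1)
  omega

variable {ι : Type*} [Fintype ι] {N : ι → Finset β}

theorem card_biUnion_powersetCard (h : Pairwise fun i j => #(N i ∩ N j) < r) :
    #(univ.biUnion fun i => (N i).powersetCard r) = ∑ i, (#(N i)).choose r := by
  rw [card_biUnion fun i _ j _ hij => disjoint_powersetCard_of_card_inter_lt (h hij)]
  simp only [card_powersetCard]

variable [Fintype β]

theorem biUnion_powersetCard_subset :
    (univ.biUnion fun i => (N i).powersetCard r) ⊆ (univ : Finset β).powersetCard r :=
  biUnion_subset.2 fun _ _ => powersetCard_mono (subset_univ _)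

theorem sum_choose_card_le (h : Pairwise fun i j => #(N i ∩ N j) < r) :
    ∑ i, (#(N i)).choose r ≤ (Fintype.card β).choose r := by
  rw [← card_biUnion_powersetCard h, Fintype.card, ← card_powersetCard]
  exact card_le_card biUnion_powersetCard_subset

theorem exists_subset_of_sum_choose_card_eq (h : Pairwise fun i j => #(N i ∩ N j) < r)
    (heq : ∑ i, (#(N i)).choose r = (Fintype.card β).choose r) (S : Finset β) (hS : #S = r) :
    ∃ i, S ⊆ N i := by
  rw [← card_biUnion_powersetCard h, Fintype.card, ← card_powersetCard] at heq
  have hS' : S ∈ (univ : Finset β).powersetCard r := mem_powersetCard.2 ⟨subset_univ S, hS⟩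
  rw [← eq_of_subset_of_card_le biUnion_powersetCard_subset heq.ge, mem_biUnion] at hS'
  obtain ⟨i, -, hi⟩ := hS'
  exact ⟨i, (mem_powersetCard.1 hi).1⟩

end Packing

section Partition

variable {β : Type*} [DecidableEq β] {r k : ℕ}

theorem card_inter_lt_of_existsUnique_subset {P : Finset (Finset β)}
    (hP : ∀ S : Finset β, #S = r → ∃! A, A ∈ P ∧ S ⊆ A) {A B : Finset β} (hA : A ∈ P)
    (hB : B ∈ P) (hAB : A ≠ B) : #(A ∩ B) < r := by
  by_contra! hr
  obtain ⟨S, hS, hSr⟩ := exists_subset_card_eq hr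
  exact hAB ((hP S hSr).unique ⟨hA, hS.trans inter_subset_left⟩
    ⟨hB, hS.trans inter_subset_right⟩)

variable {ι : Type*} [Fintype ι] {N : ι → Finset β}

theorem exists_partition_of_pairwise_card_inter_lt (h : Pairwise fun i j => #(N i ∩ N j) < r)
    (hk : r ≤ k) (hN : ∀ i, #(N i) = k) (hcover : ∀ S : Finset β, #S = r → ∃ i, S ⊆ N i) :
    ∃ P : Finset (Finset β), #P = Fintype.card ι ∧ (∀ A ∈ P, #A = k) ∧
      ∀ S : Finset β, #S = r → ∃! A, A ∈ P ∧ S ⊆ A := by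
  have hunique : ∀ {S : Finset β}, #S = r → ∀ {i j}, S ⊆ N i → S ⊆ N j → i = j := by
    intro S hS i j hi hj
    by_contra hij
    have := card_le_card (subset_inter hi hj)
    have := h hij
    omega
  have hinj : Function.Injective N := fun i j hij => by
    obtain ⟨S, hS, hSr⟩ := exists_subset_card_eq (hk.trans (hN i).ge)
    exact hunique hSr hS (hij ▸ hS)
  refine ⟨univ.image N, by rw [card_image_of_injective _ hinj, card_univ], ?_, ?_⟩
  · simp only [mem_image, mem_univ, true_and, forall_exists_index, forall_apply_eq_imp_iff, hN,
      implies_true]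
  · intro S hS
    obtain ⟨i, hi⟩ := hcover S hS
    refine ⟨N i, ⟨mem_image_of_mem N (mem_univ i), hi⟩, ?_⟩
    rintro A ⟨hA, hSA⟩
    obtain ⟨j, -, rfl⟩ := mem_image.1 hA
    rw [hunique hS hSA hi]

end Partition

section BipartiteGraph

variable {α β : Type*} [DecidableEq α] [DecidableEq β] [Fintype α] [Fintype β]

def nbhd (E : Finset (α × β)) (a : α) : Finset β :=
  univ.filter fun b => (a, b) ∈ E

theorem card_eq_sum_card_nbhd (E : Finset (α × β)) : #E = ∑ a, #(nbhd E a) := by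
  simp only [nbhd, card_filter]
  rw [← Fintype.sum_prod_type (f := fun x => if x ∈ E then 1 else 0), ← card_filter,
    filter_univ_mem]

theorem nbhd_filter_mem (N : α → Finset β) : nbhd (univ.filter fun x => x.2 ∈ N x.1) = N := by
  ext a b
  simp [nbhd]

variable {E : Finset (α × β)} {r k : ℕ}

theorem card_le_of_pairwise_card_nbhd_inter_lt (hr : 0 < r) (hk : r ≤ k)
    (hcard : Fintype.card α * k.choose r = (Fintype.card β).choose r)
    (hE : Pairwise fun a a' => #(nbhd E a ∩ nbhd E a') < r) : #E ≤ k * Fintype.card α := by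
  rw [card_eq_sum_card_nbhd, mul_comm, ← card_univ]
  refine sum_le_card_mul_of_sum_choose_le hr hk ?_
  rw [card_univ, hcard]
  exact sum_choose_card_le hE

theorem card_nbhd_eq_of_card_eq (hr : 2 ≤ r) (hk : r ≤ k)
    (hcard : Fintype.card α * k.choose r = (Fintype.card β).choose r)
    (hE : Pairwise fun a a' => #(nbhd E a ∩ nbhd E a') < r) (hEk : #E = k * Fintype.card α)
    (a : α) : #(nbhd E a) = k := by
  rw [card_eq_sum_card_nbhd, mul_comm, ← card_univ] at hEk
  refine eq_of_sum_choose_le_of_sum_eq hr hk ?_ hEk a (mem_univ a)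
  rw [card_univ, hcard]
  exact sum_choose_card_le hE

theorem exists_pairwise_card_nbhd_inter_lt_of_partition {P : Finset (Finset β)}
    (hPα : #P = Fintype.card α) (hPk : ∀ A ∈ P, #A = k)
    (hP : ∀ S : Finset β, #S = r → ∃! A, A ∈ P ∧ S ⊆ A) :
    ∃ E : Finset (α × β), (Pairwise fun a a' => #(nbhd E a ∩ nbhd E a') < r) ∧
      #E = k * Fintype.card α := by
  let e : α ≃ P := (Fintype.equivOfCardEq (by rw [Fintype.card_coe, hPα])).symm
  refine ⟨univ.filter fun x => x.2 ∈ (e x.1 : Finset β), ?_, ?_⟩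
  · intro a a' haa'
    rw [nbhd_filter_mem fun a => (e a : Finset β)]
    exact card_inter_lt_of_existsUnique_subset hP (e a).2 (e a').2
      (Subtype.coe_injective.ne (e.injective.ne haa'))
  · rw [card_eq_sum_card_nbhd, nbhd_filter_mem fun a => (e a : Finset β)]
    simp [hPk _ (e _).2, mul_comm]

end BipartiteGraph

theorem zar_eq_iff_of_forall_card_le {m n r c : ℕ} (hr : 0 < r)
    (hle : ∀ E : Finset (Fin m × Fin n),
      (Pairwise fun a a' => #(nbhd E a ∩ nbhd E a') < r) → #E ≤ c) :
    zar m n r = c ↔ ∃ E : Finset (Fin m × Fin n),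
      (Pairwise fun a a' => #(nbhd E a ∩ nbhd E a') < r) ∧ #E = c := by
  have hzar : zar m n r =
      sSup {e | ∃ E : Finset (Fin m × Fin n),
        (Pairwise fun a a' => #(nbhd E a ∩ nbhd E a') < r) ∧ #E = e} := by
    simp only [zar, nbhd, ← filter_and]
    rfl
  have hbound : c ∈ upperBounds {e | ∃ E : Finset (Fin m × Fin n),
      (Pairwise fun a a' => #(nbhd E a ∩ nbhd E a') < r) ∧ #E = e} := by
    rintro e ⟨E, hE, rfl⟩
    exact hle E hE
  rw [hzar]
  constructor
  · intro h
    rw [← h]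
    refine Nat.sSup_mem ⟨0, ?_⟩ ⟨c, hbound⟩
    exact ⟨∅, fun a a' _ => by simpa [nbhd] using hr, card_empty⟩
  · rintro ⟨E, hE, rfl⟩
    exact IsGreatest.csSup_eq ⟨⟨E, hE, rfl⟩, hbound⟩

theorem partition_iff_zarankiewicz_general (n k r : ℕ) (hr : 2 ≤ r) (hk : r ≤ k) (m : ℕ)
    (hmc : m * Nat.choose k r = Nat.choose n r) :
    (∃ P : Finset (Finset (Fin n)), P.card = m ∧ (∀ A ∈ P, A.card = k) ∧
      ∀ S : Finset (Fin n), S.card = r → ∃! A, A ∈ P ∧ S ⊆ A) ↔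
    zar m n r = k * m := by
  have hcard : Fintype.card (Fin m) * k.choose r = (Fintype.card (Fin n)).choose r := by
    simpa using hmc
  rw [zar_eq_iff_of_forall_card_le (by omega) fun E hE => by
    simpa using card_le_of_pairwise_card_nbhd_inter_lt (by omega) hk hcard hE]
  constructor
  · rintro ⟨P, hPm, hPk, hP⟩
    simpa using exists_pairwise_card_nbhd_inter_lt_of_partition (α := Fin m)
      (by rwa [Fintype.card_fin]) hPk hP
  · rintro ⟨E, hE, hEk⟩
    have hdeg := card_nbhd_eq_of_card_eq hr hk hcard hE (by rwa [Fintype.card_fin])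
    have hcover := exists_subset_of_sum_choose_card_eq hE (by simpa [hdeg] using hcard)
    simpa using exists_partition_of_pairwise_card_inter_lt hE hk hdeg hcover

/-- for `n > k ≥ r ≥ 2` with `m = C(n,r)/C(k,r)` a positive
integer, the `r`-subsets of `[n]` can be partitioned into `m` cliques of size
`k` iff `z(m, n, 2, r) = km`. -/
theorem partition_iff_zarankiewicz (n k r : ℕ) (hr : 2 ≤ r) (hk : r ≤ k)
    (hn : k < n) (m : ℕ) (hm : 0 < m)
    (hmc : m * Nat.choose k r = Nat.choose n r) :
    (∃ P : Finset (Finset (Fin n)), P.card = m ∧ (∀ A ∈ P, A.card = k) ∧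
      ∀ S : Finset (Fin n), S.card = r → ∃! A, A ∈ P ∧ S ⊆ A) ↔
    zar m n r = k * m :=
  partition_iff_zarankiewicz_general n k r hr hk m hmc
end

section
/- For every integer n ≥ 3, cp(n, 2) = n; that is, the minimum number of proper subsets A_1, ..., A_t ⊊ [n] such that every 2-element subset of [n] is contained in exactly one A_i equals n (the de Bruijn–Erdős theorem). -/
/-!
Regard the members of a clique partition as the lines of an incidence structure on `[n]`:
any two points lie on exactly one line and no line contains every point. Mathlib's
`Configuration.HasLines.card_le` (the counting argument of de Bruijn and Erdős) then gives at
least as many lines as points. Conversely the near-pencil `{[n] \ {c}} ∪ {{c, x} : x ≠ c}` is a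
clique partition with exactly `n` members, proper as soon as `n ≥ 3`.
-/

namespace Finset

variable {α : Type*}

/-- The members of `P` as a type of lines, so that `Configuration` applies. -/
def Blocks (P : Finset (Finset α)) : Type _ := {A // A ∈ P}

instance (P : Finset (Finset α)) : Membership α (Blocks P) := ⟨fun A p => p ∈ A.1⟩

instance (P : Finset (Finset α)) : Fintype (Blocks P) := inferInstanceAs (Fintype {A // A ∈ P})

theorem card_blocks (P : Finset (Finset α)) : Fintype.card (Blocks P) = P.card :=
  Fintype.card_coe P

variable [Fintype α] {P : Finset (Finset α)}

theorem exists_notMem_of_ne_univ {A : Finset α} (hA : A ≠ univ) : ∃ s, s ∉ A := by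
  by_contra! h
  exact hA (eq_univ_iff_forall.mpr h)

noncomputable abbrev Blocks.hasLines [Nontrivial α] (hproper : ∀ A ∈ P, A ≠ univ)
    (hunique : ∀ p q : α, p ≠ q → ∃! A, A ∈ P ∧ p ∈ A ∧ q ∈ A) :
    Configuration.HasLines α (Blocks P) where
  exists_point l := exists_notMem_of_ne_univ (hproper l.1 l.2)
  exists_line p := by
    obtain ⟨q, hqp⟩ := exists_ne p
    obtain ⟨A, ⟨hA, hpA, hqA⟩, -⟩ := hunique p q hqp.symm
    obtain ⟨s, hsA⟩ := exists_notMem_of_ne_univ (hproper A hA)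
    have hsq : s ≠ q := fun h => hsA (h ▸ hqA)
    obtain ⟨B, ⟨hB, hsB, hqB⟩, -⟩ := hunique s q hsq
    refine ⟨⟨B, hB⟩, fun hpB => hsA ?_⟩
    -- `B` would be a second line through `p` and `q`.
    rwa [(hunique p q hqp.symm).unique ⟨hA, hpA, hqA⟩ ⟨hB, hpB, hqB⟩]
  eq_or_eq {p₁ p₂ l₁ l₂} h₁₁ h₂₁ h₁₂ h₂₂ := by
    by_cases h : p₁ = p₂
    · exact .inl h
    · exact .inr (Subtype.ext ((hunique p₁ p₂ h).unique ⟨l₁.2, h₁₁, h₂₁⟩ ⟨l₂.2, h₁₂, h₂₂⟩))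
  mkLine {p q} h := ⟨(hunique p q h).exists.choose, (hunique p q h).exists.choose_spec.1⟩
  mkLine_ax {p q} h := (hunique p q h).exists.choose_spec.2

theorem card_le_card_of_existsUnique_mem_pair [Nontrivial α] (hproper : ∀ A ∈ P, A ≠ univ)
    (hunique : ∀ p q : α, p ≠ q → ∃! A, A ∈ P ∧ p ∈ A ∧ q ∈ A) :
    Fintype.card α ≤ P.card := by
  let := Blocks.hasLines hproper hunique
  simpa only [card_blocks] using Configuration.HasLines.card_le α (Blocks P)

variable [DecidableEq α]

def nearPencil (c : α) : Finset (Finset α) :=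
  insert (univ.erase c) ((univ.erase c).image fun x => {c, x})

theorem mem_nearPencil {c : α} {B : Finset α} :
    B ∈ nearPencil c ↔ B = univ.erase c ∨ ∃ x ≠ c, B = {c, x} := by
  simp [nearPencil, eq_comm]

theorem card_nearPencil (c : α) : (nearPencil c).card = Fintype.card α := by
  have hinj : Set.InjOn (fun x => ({c, x} : Finset α)) (univ.erase c) := by
    intro x hx y _ hxy
    have hx' : x ∈ ({c, y} : Finset α) := by
      rw [← show ({c, x} : Finset α) = {c, y} from hxy]; simp
    simpa [ne_of_mem_erase hx] using hx'
  have hnotMem : univ.erase c ∉ (univ.erase c).image fun x => ({c, x} : Finset α) := by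
    simp only [mem_image, not_exists, not_and]
    intro x _ h
    have hc : c ∈ univ.erase c := h ▸ mem_insert_self c {x}
    exact notMem_erase c univ hc
  rw [nearPencil, card_insert_of_notMem hnotMem, card_image_of_injOn hinj,
    card_erase_of_mem (mem_univ c), card_univ,
    Nat.sub_add_cancel (Fintype.card_pos_iff.mpr ⟨c⟩)]

theorem nearPencil_ne_univ (hα : 3 ≤ Fintype.card α) {c : α} :
    ∀ A ∈ nearPencil c, A ≠ univ := by
  intro A hA
  rcases mem_nearPencil.mp hA with rfl | ⟨x, -, rfl⟩
  · exact fun h => notMem_erase c univ (by rw [h]; exact mem_univ c)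
  · intro h
    have := card_le_two (a := c) (b := x)
    rw [h, card_univ] at this
    omega

theorem existsUnique_nearPencil_superset (c : α) {S : Finset α} (hS : S.card = 2) :
    ∃! A, A ∈ nearPencil c ∧ S ⊆ A := by
  obtain ⟨a, b, hab, rfl⟩ := card_eq_two.mp hS
  by_cases hc : c ∈ ({a, b} : Finset α)
  · obtain ⟨x, hxc, hx⟩ : ∃ x ≠ c, ({a, b} : Finset α) = {c, x} := by
      rcases mem_insert.mp hc with rfl | h
      · exact ⟨b, Ne.symm hab, rfl⟩
      · obtain rfl := mem_singleton.mp h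
        exact ⟨a, hab, pair_comm a c⟩
    rw [hx]
    refine ⟨{c, x}, ⟨mem_nearPencil.mpr (.inr ⟨x, hxc, rfl⟩), Subset.rfl⟩, ?_⟩
    rintro B ⟨hB, hsub⟩
    rcases mem_nearPencil.mp hB with rfl | ⟨y, -, rfl⟩
    · exact absurd (hsub (mem_insert_self c {x})) (notMem_erase c univ)
    · have hxy : x ∈ ({c, y} : Finset α) := hsub (by simp)
      simp only [mem_insert, mem_singleton, hxc, false_or] at hxy
      rw [hxy]
  · have hsub : ({a, b} : Finset α) ⊆ univ.erase c := fun y hy =>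
      mem_erase.mpr ⟨fun h => hc (h ▸ hy), mem_univ y⟩
    refine ⟨univ.erase c, ⟨mem_nearPencil.mpr (.inl rfl), hsub⟩, ?_⟩
    rintro B ⟨hB, hsubB⟩
    rcases mem_nearPencil.mp hB with rfl | ⟨y, -, rfl⟩
    · rfl
    · -- `{a, b}` avoids `c`, so it would fit inside `{y}`.
      have hab' : ({a, b} : Finset α) ⊆ {y} := fun z hz => by
        have := hsubB hz
        simp only [mem_insert, mem_singleton] at this
        exact mem_singleton.mpr (this.resolve_left fun h => hc (h ▸ hz))
      simpa [hab] using card_le_card hab'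

end Finset

theorem IsCliquePartition.existsUnique_mem_pair {n : ℕ} {P : Finset (Finset (Fin n))}
    (hP : IsCliquePartition n 2 P) {p q : Fin n} (hpq : p ≠ q) :
    ∃! A, A ∈ P ∧ p ∈ A ∧ q ∈ A := by
  simpa only [Finset.insert_subset_iff, Finset.singleton_subset_iff] using
    hP.2 {p, q} (Finset.card_pair hpq)

theorem IsCliquePartition.le_card {n : ℕ} (hn : 2 ≤ n) {P : Finset (Finset (Fin n))}
    (hP : IsCliquePartition n 2 P) : n ≤ P.card := by
  have : Nontrivial (Fin n) := Fin.nontrivial_iff_two_le.mpr hn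
  simpa using Finset.card_le_card_of_existsUnique_mem_pair hP.1
    fun _ _ => hP.existsUnique_mem_pair

theorem isCliquePartition_nearPencil {n : ℕ} (hn : 3 ≤ n) (c : Fin n) :
    IsCliquePartition n 2 (Finset.nearPencil c) :=
  ⟨Finset.nearPencil_ne_univ (by simpa using hn),
    fun _ => Finset.existsUnique_nearPencil_superset c⟩

/-- de Bruijn–Erdős: for every `n ≥ 3`, `cp(n, 2) = n`. -/
theorem deBruijn_Erdos (n : ℕ) (hn : 3 ≤ n) : cp n 2 = n := by
  refine IsLeast.csInf_eq ⟨⟨Finset.nearPencil (⟨0, by omega⟩ : Fin n), ?_, ?_⟩, ?_⟩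
  · exact isCliquePartition_nearPencil hn _
  · simp [Finset.card_nearPencil]
  · rintro t ⟨P, hP, rfl⟩
    exact hP.le_card (by omega)
end
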